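/- arXiv:1311.1719 — 6 statements merged into one kernel-verified Lean document; each statement's English description precedes it below -/
import Mathlib

section
/- Let κ be a cardinal and let C be a class of regular topological spaces that is regular closed hereditary, i.e., whenever X ∈ C, every nonempty regular closed subset of X (with the subspace topology) belongs to C. If every space X ∈ C with |X| = Δ(X) has a κ-resolvable subspace, then every member of C is κ-resolvable. -/
/-!
In a regular space every nonempty open set `U` contains a nonempty regular closed set `R` with
`|R| = Δ(R)`: take a nonempty open `W ⊆ U` of least cardinality and `R = closure V` for a nonempty
open `V` with `closure V ⊆ W`; every nonempty open subset of `R` contains a nonempty open subset of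
`U`, hence is at least as large as `W ⊇ R`. Applying the hypothesis to `R ∈ C` yields a nonempty
`κ`-resolvable subspace inside every nonempty open set. By Zorn, a maximal disjoint family of such
subspaces has dense union, and the unions of the `i`-th dense sets of its members, `i < κ`, are
`κ` disjoint dense subsets of the whole space.
-/

open Cardinal Set Topology

universe u

/-- A space is `lam`-resolvable if it has `lam` many pairwise disjoint dense subsets. -/
def IsLamResolvable (X : Type u) [TopologicalSpace X] (lam : Cardinal.{u}) : Prop :=
  ∃ 𝒟 : Set (Set X), #𝒟 = lam ∧ (∀ D ∈ 𝒟, Dense D) ∧ 𝒟.PairwiseDisjoint id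

/-- The dispersion character: the minimum cardinality of a nonempty open subset. -/
noncomputable def dispersion (X : Type u) [TopologicalSpace X] : Cardinal.{u} :=
  sInf {c | ∃ U : Set X, IsOpen U ∧ U.Nonempty ∧ c = #U}

/-- The extent: the supremum of the cardinalities of closed discrete subsets. -/
noncomputable def extent (X : Type u) [TopologicalSpace X] : Cardinal.{u} :=
  sSup {c | ∃ D : Set X, IsClosed D ∧ DiscreteTopology D ∧ c = #D}

/-- The derived set: the set of accumulation points of `A`. -/
def derivedPts {X : Type u} [TopologicalSpace X] (A : Set X) : Set X :=
  {x | ∀ U : Set X, IsOpen U → x ∈ U → ∃ y ∈ U ∩ A, y ≠ x}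

/-- The set of complete accumulation points of `A`. -/
def caPts {X : Type u} [TopologicalSpace X] (A : Set X) : Set X :=
  {x | ∀ U : Set X, IsOpen U → x ∈ U → #(↥(U ∩ A)) = #A}

/-- `lam`-compact: every subset of cardinality `lam` has a complete accumulation point. -/
def LamCompactSpace (X : Type u) [TopologicalSpace X] (lam : Cardinal.{u}) : Prop :=
  ∀ A : Set X, #A = lam → (caPts A).Nonempty

/-- A set is regular closed if it equals the closure of its interior. -/
def IsRegClosed {X : Type u} [TopologicalSpace X] (R : Set X) : Prop :=
  R = closure (interior R)

/-- A π-network: every nonempty open set includes a member of the family. -/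
def IsPiNetwork {X : Type u} [TopologicalSpace X] (N : Set (Set X)) : Prop :=
  ∀ U : Set X, IsOpen U → U.Nonempty → ∃ P ∈ N, P ⊆ U

/-- π-regular: the nonempty regular closed sets form a π-network. -/
def PiRegularSpace (X : Type u) [TopologicalSpace X] : Prop :=
  ∀ U : Set X, IsOpen U → U.Nonempty → ∃ R : Set X, R.Nonempty ∧ IsRegClosed R ∧ R ⊆ U

/-- The `<κ`-closure of `Y`: the union of the closures of all subsets of `Y`
of cardinality `< κ`. -/
def smallClosure {X : Type u} [TopologicalSpace X] (κ : Cardinal.{u}) (Y : Set X) : Set X :=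
  ⋃ S ∈ {S : Set X | S ⊆ Y ∧ #S < κ}, closure S

/-- `Y` is `<κ`-closed if it equals its `<κ`-closure. -/
def IsSmallClosed {X : Type u} [TopologicalSpace X] (κ : Cardinal.{u}) (Y : Set X) : Prop :=
  smallClosure κ Y = Y

/-- A chain decomposition of the set `S` of length `β`: an increasing continuous
sequence of sets with union `S` (where `0` also counts as a limit ordinal). -/
def IsChainDecomp {X : Type u} (β : Ordinal.{u}) (f : Ordinal.{u} → Set X) (S : Set X) : Prop :=
  (∀ a b : Ordinal.{u}, a ≤ b → b < β → f a ⊆ f b) ∧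
  (∀ δ : Ordinal.{u}, δ < β → (δ = 0 ∨ Order.IsSuccLimit δ) → f δ = ⋃ a ∈ Set.Iio δ, f a) ∧
  S = ⋃ a ∈ Set.Iio β, f a

/-- `H` is `κ`-approximated in `X`. -/
def IsKApproximated {X : Type u} [TopologicalSpace X] (κ : Cardinal.{u}) (H : Set X) : Prop :=
  ∃ 𝒜 : Set (Set X), #𝒜 = κ ∧ 𝒜.PairwiseDisjoint id ∧
    ∀ A ∈ 𝒜, #A = κ ∧ (∀ Y : Set X, Y ⊆ A → #Y = κ → (caPts Y).Nonempty) ∧ caPts A = H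

/-- `F` is `κ`-nice in `X`. -/
def IsKNice {X : Type u} [TopologicalSpace X] (κ : Cardinal.{u}) (F : Set X) : Prop :=
  ∃ A : Ordinal.{u} → Set X,
    (∀ a ∈ Set.Iio (Order.succ κ).ord, ∀ b ∈ Set.Iio (Order.succ κ).ord,
      a ≠ b → Disjoint (A a) (A b)) ∧
    (∀ a ∈ Set.Iio (Order.succ κ).ord, IsLamResolvable ↥(A a) κ) ∧
    F = ⋂ a ∈ Set.Iio (Order.succ κ).ord,
      closure (⋃ b ∈ Set.Ico a (Order.succ κ).ord, A b)

theorem isRegClosed_closure {X : Type u} [TopologicalSpace X] {V : Set X} (hV : IsOpen V) :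
    IsRegClosed (closure V) :=
  (closure_minimal interior_subset isClosed_closure).antisymm'
    (closure_mono (hV.subset_interior_iff.mpr subset_closure))

section Dispersion

variable {X : Type u} [TopologicalSpace X]

theorem dispersion_le {U : Set X} (hU : IsOpen U) (hUne : U.Nonempty) : dispersion X ≤ #U :=
  csInf_le (OrderBot.bddBelow _) ⟨U, hU, hUne, rfl⟩

theorem le_dispersion [Nonempty X] {c : Cardinal.{u}}
    (h : ∀ U : Set X, IsOpen U → U.Nonempty → c ≤ #U) : c ≤ dispersion X :=
  le_csInf ⟨_, univ, isOpen_univ, univ_nonempty, rfl⟩ fun _ ⟨U, hU, hUne, hc⟩ => hc ▸ h U hU hUne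

theorem mk_eq_dispersion_of_isEmpty [IsEmpty X] : #X = dispersion X := by
  have : {c | ∃ U : Set X, IsOpen U ∧ U.Nonempty ∧ c = #U} = ∅ :=
    eq_empty_of_forall_notMem fun _ ⟨_, _, ⟨x, _⟩, _⟩ => isEmptyElim x
  rw [dispersion, this, Cardinal.sInf_empty, mk_eq_zero]

theorem exists_isRegClosed_subset_mk_eq_dispersion [RegularSpace X] {U : Set X}
    (hU : IsOpen U) (hUne : U.Nonempty) :
    ∃ R ⊆ U, R.Nonempty ∧ IsRegClosed R ∧ #R = dispersion R := by
  obtain ⟨W, ⟨hW, hWne, hWU⟩, hWmin⟩ :=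
    (InvImage.wf (fun W : Set X => #W) Cardinal.lt_wf).has_min
      {W | IsOpen W ∧ W.Nonempty ∧ W ⊆ U} ⟨U, hU, hUne, subset_rfl⟩
  obtain ⟨x, hxW⟩ := hWne
  obtain ⟨V, ⟨hxV, hV⟩, hVW⟩ := (hasBasis_opens_closure x).mem_iff.mp (hW.mem_nhds hxW)
  have hVU : V ⊆ U := subset_closure.trans (hVW.trans hWU)
  have hRne : (closure V).Nonempty := ⟨x, subset_closure hxV⟩
  have : Nonempty (closure V) := hRne.to_subtype
  refine ⟨closure V, hVW.trans hWU, hRne, isRegClosed_closure hV, ?_⟩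
  refine le_antisymm (le_dispersion fun O hO hOne => ?_)
    (mk_univ ▸ dispersion_le isOpen_univ univ_nonempty)
  obtain ⟨W', hW', rfl⟩ := isOpen_induced_iff.mp hO
  obtain ⟨⟨z, hz⟩, hzW'⟩ := hOne
  have hVW' : (V ∩ W').Nonempty := (closure_inter_open_nonempty_iff hW').mp ⟨z, hz, hzW'⟩
  calc #(closure V) ≤ #W := mk_le_mk_of_subset hVW
    _ ≤ #(V ∩ W' : Set X) := not_lt.mp (hWmin _ ⟨hV.inter hW', hVW', inter_subset_left.trans hVU⟩)
    _ ≤ #(Subtype.val ⁻¹' (V ∩ W') : Set (closure V)) := mk_preimage_of_subset_range _ _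
        (by rw [Subtype.range_coe]; exact inter_subset_left.trans subset_closure)
    _ ≤ #(Subtype.val ⁻¹' W' : Set (closure V)) := mk_le_mk_of_subset fun _ h => h.2

end Dispersion

section Resolvable

open Function

variable {X : Type u} [TopologicalSpace X] {κ : Cardinal.{u}}

theorem isLamResolvable_of_le_one (hκ : κ ≤ 1) : IsLamResolvable X κ := by
  rcases Cardinal.le_one_iff.mp hκ with rfl | rfl
  · exact ⟨∅, by simp, by simp, pairwiseDisjoint_empty⟩
  · exact ⟨{Set.univ}, mk_singleton _, by simp, pairwiseDisjoint_singleton _ _⟩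

theorem IsLamResolvable.nonempty (h : IsLamResolvable X κ) (hκ : 1 < κ) : Nonempty X := by
  by_contra hX
  have : IsEmpty X := not_nonempty_iff.mp hX
  obtain ⟨𝒟, rfl, -, -⟩ := h
  exact hκ.not_ge (mk_le_one_iff_set_subsingleton.mpr subsingleton_of_subsingleton)

theorem IsLamResolvable.of_homeomorph {X' : Type u} [TopologicalSpace X'] (e : X ≃ₜ X')
    (h : IsLamResolvable X κ) : IsLamResolvable X' κ := by
  obtain ⟨𝒟, h𝒟, hdense, hdisj⟩ := h
  refine ⟨image e '' 𝒟, ?_, ?_, ?_⟩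
  · rw [mk_image_eq (image_injective.mpr e.injective), h𝒟]
  · rintro _ ⟨D, hD, rfl⟩
    exact e.isDenseEmbedding.dense_image.mpr (hdense D hD)
  · rintro _ ⟨D, hD, rfl⟩ _ ⟨E, hE, rfl⟩ hne
    exact (disjoint_image_iff e.injective).mpr (hdisj hD hE fun h => hne (h ▸ rfl))

theorem IsLamResolvable.image_val {R : Set X} {Z : Set R} (h : IsLamResolvable Z κ) :
    IsLamResolvable (Subtype.val '' Z : Set X) κ :=
  h.of_homeomorph <| (IsEmbedding.subtypeVal.comp IsEmbedding.subtypeVal).toHomeomorph.trans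
    (Homeomorph.setCongr (by rw [range_comp, Subtype.range_coe]))

theorem IsLamResolvable.exists_dense_pairwise_disjoint (h : IsLamResolvable X κ) :
    ∃ d : κ.out → Set X, (∀ i, Dense (d i)) ∧ Pairwise (Disjoint on d) := by
  obtain ⟨𝒟, h𝒟, hdense, hdisj⟩ := h
  obtain ⟨e⟩ : Nonempty (κ.out ≃ 𝒟) := Cardinal.eq.mp (by rw [mk_out, h𝒟])
  exact ⟨fun i => e i, fun i => hdense _ (e i).2,
    fun i j hij => hdisj (e i).2 (e j).2 fun h => hij (e.injective (Subtype.ext h))⟩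

theorem isLamResolvable_of_dense_pairwise_disjoint [Nonempty X] {ι : Type u} {d : ι → Set X}
    (hdense : ∀ i, Dense (d i)) (hdisj : Pairwise (Disjoint on d)) : IsLamResolvable X #ι := by
  have hinj : Injective d := fun i j hij => by
    by_contra hne
    have hdisj_ij : Disjoint (d i) (d j) := hdisj hne
    rw [hij, disjoint_self] at hdisj_ij
    exact (hdense j).nonempty.ne_empty hdisj_ij
  refine ⟨range d, mk_range_eq d hinj, forall_mem_range.mpr hdense, ?_⟩
  rintro _ ⟨i, rfl⟩ _ ⟨j, rfl⟩ hne
  exact hdisj fun h => hne (h ▸ rfl)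

theorem isLamResolvable_of_dense_sUnion [Nonempty X] {ℳ : Set (Set X)}
    (hdisj : ℳ.PairwiseDisjoint id) (hdense : Dense (⋃₀ ℳ))
    (hres : ∀ F ∈ ℳ, IsLamResolvable F κ) : IsLamResolvable X κ := by
  choose d hd hdd using fun F : ℳ => IsLamResolvable.exists_dense_pairwise_disjoint (hres F F.2)
  rw [← mk_out κ]
  refine isLamResolvable_of_dense_pairwise_disjoint (d := fun i => ⋃ F : ℳ, Subtype.val '' d F i)
    (fun i => dense_closure.mp (hdense.mono (sUnion_subset fun F hF y hy => ?_))) fun i j hij => ?_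
  · exact closure_mono (subset_iUnion (fun F : ℳ => Subtype.val '' d F i) ⟨F, hF⟩)
      (closure_subtype.mp (hd ⟨F, hF⟩ i ⟨y, hy⟩))
  · refine disjoint_iUnion_left.mpr fun F => disjoint_iUnion_right.mpr fun G => ?_
    rcases eq_or_ne F G with rfl | hFG
    · exact (disjoint_image_iff Subtype.val_injective).mpr (hdd F hij)
    · exact (hdisj F.2 G.2 (Subtype.coe_ne_coe.mpr hFG)).mono
        (Subtype.coe_image_subset _ _) (Subtype.coe_image_subset _ _)

theorem exists_pairwiseDisjoint_dense_sUnion_isLamResolvable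
    (h : ∀ U : Set X, IsOpen U → U.Nonempty → ∃ Z ⊆ U, Z.Nonempty ∧ IsLamResolvable Z κ) :
    ∃ ℳ : Set (Set X), ℳ.PairwiseDisjoint id ∧ Dense (⋃₀ ℳ) ∧
      ∀ F ∈ ℳ, IsLamResolvable F κ := by
  obtain ⟨ℳ, ⟨hdisj, hℳ⟩, hmax⟩ := zorn_subset
    {ℳ : Set (Set X) | ℳ.PairwiseDisjoint id ∧ ∀ F ∈ ℳ, F.Nonempty ∧ IsLamResolvable F κ}
    fun c hc hchain => ⟨⋃₀ c,
      ⟨(pairwiseDisjoint_sUnion hchain.directedOn).mpr fun _ h => (hc h).1,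
        fun _ ⟨_, h, hF⟩ => (hc h).2 _ hF⟩,
      fun _ => subset_sUnion_of_mem⟩
  refine ⟨ℳ, hdisj, ?_, fun F hF => (hℳ F hF).2⟩
  by_contra hnd
  obtain ⟨Z, hZ, hZne, hZres⟩ := h _ isClosed_closure.isOpen_compl
    (nonempty_compl.mpr (mt dense_iff_closure_eq.mpr hnd))
  have hZdisj : ∀ F ∈ ℳ, Disjoint F Z := fun F hF =>
    disjoint_compl_right.mono ((subset_sUnion_of_mem hF).trans subset_closure) hZ
  have hZℳ : Z ∈ ℳ := hmax ⟨hdisj.insert fun F hF _ => (hZdisj F hF).symm,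
    forall_mem_insert.mpr ⟨⟨hZne, hZres⟩, hℳ⟩⟩ (subset_insert _ _) (mem_insert _ _)
  exact hZne.ne_empty (disjoint_self.mp (hZdisj Z hZℳ))

end Resolvable

/-- If `C` is a regular closed hereditary class of regular spaces and every
`X ∈ C` with `|X| = Δ(X)` has a `κ`-resolvable subspace, then every member of `C` is
`κ`-resolvable. -/
theorem stmt7 (κ : Cardinal.{u})
    (C : (Y : Type u) → [inst : TopologicalSpace Y] → Prop)
    (hCreg : ∀ (Y : Type u) [TopologicalSpace Y], C Y → RegularSpace Y)
    (hher : ∀ (Y : Type u) [TopologicalSpace Y], C Y →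
      ∀ R : Set Y, R.Nonempty → IsRegClosed R → C ↥R)
    (hres : ∀ (Y : Type u) [TopologicalSpace Y], C Y → #Y = dispersion Y →
      ∃ Z : Set Y, IsLamResolvable ↥Z κ) :
    ∀ (Y : Type u) [TopologicalSpace Y], C Y → IsLamResolvable Y κ := by
  intro Y _ hY
  have := hCreg Y hY
  rcases le_or_gt κ 1 with hκ | hκ
  · exact isLamResolvable_of_le_one hκ
  cases isEmpty_or_nonempty Y
  · obtain ⟨Z, hZ⟩ := hres Y hY mk_eq_dispersion_of_isEmpty
    exact isEmptyElim (hZ.nonempty hκ).some.1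
  have hlocal : ∀ U : Set Y, IsOpen U → U.Nonempty →
      ∃ Z ⊆ U, Z.Nonempty ∧ IsLamResolvable Z κ := by
    intro U hU hUne
    obtain ⟨R, hRU, hRne, hR, hRdisp⟩ := exists_isRegClosed_subset_mk_eq_dispersion hU hUne
    obtain ⟨Z, hZ⟩ := hres R (hher Y hY R hRne hR) hRdisp
    have := hZ.nonempty hκ
    exact ⟨Subtype.val '' Z, (Subtype.coe_image_subset R Z).trans hRU,
      (nonempty_coe_sort.mp this).image _, hZ.image_val⟩
  obtain ⟨ℳ, hdisj, hdense, hℳ⟩ := exists_pairwiseDisjoint_dense_sUnion_isLamResolvable hlocal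
  exact isLamResolvable_of_dense_sUnion hdisj hdense hℳ
end

section
/- Let κ be a regular cardinal and X a topological space such that every subset of X of cardinality κ has an accumulation point in X (i.e., ê(X) ≤ κ). Then for every subset A of X of cardinality κ with |A'| < κ, the set A° of complete accumulation points of A is nonempty. -/
open Cardinal Set Topology

universe u

/-!
If `A` had no complete accumulation point, each of the fewer than `κ` points of `A'` would have
an open neighbourhood meeting `A` in fewer than `κ` points. By regularity of `κ` the union `C` of
these neighbourhoods still meets `A` in fewer than `κ` points, so `A \ C` has size `κ`. But
`A \ C` has no accumulation point: one would lie in `A' ⊆ C`, an open set missing `A \ C`.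
-/

theorem Cardinal.mk_sdiff_eq_of_mk_lt {α : Type u} {A T : Set α} (hA : ℵ₀ ≤ #A)
    (hT : #T < #A) : #(A \ T : Set α) = #A := by
  refine (mk_le_mk_of_subset sdiff_subset).antisymm (not_lt.1 fun hlt ↦ ?_)
  exact (le_mk_sdiff_add_mk A T).not_gt (add_lt_of_lt hA hlt hT)

section DerivedSet

variable {X : Type u} [TopologicalSpace X]

theorem derivedPts_mono {A B : Set X} (h : A ⊆ B) : derivedPts A ⊆ derivedPts B :=
  fun _ hx U hU hxU ↦
    let ⟨y, hy, hyx⟩ := hx U hU hxU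
    ⟨y, ⟨hy.1, h hy.2⟩, hyx⟩

theorem disjoint_derivedPts_of_isOpen {B C : Set X} (hC : IsOpen C) (hBC : Disjoint B C) :
    Disjoint (derivedPts B) C := by
  refine Set.disjoint_left.2 fun x hx hxC ↦ ?_
  obtain ⟨y, ⟨hyC, hyB⟩, -⟩ := hx C hC hxC
  exact hBC.notMem_of_mem_left hyB hyC

theorem exists_isOpen_mk_inter_lt_of_notMem_caPts {A : Set X} {x : X} (hx : x ∉ caPts A) :
    ∃ U, IsOpen U ∧ x ∈ U ∧ #(U ∩ A : Set X) < #A := by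
  simp only [caPts, Set.mem_ofPred_eq, not_forall] at hx
  obtain ⟨U, hU, hxU, hne⟩ := hx
  exact ⟨U, hU, hxU, (mk_le_mk_of_subset inter_subset_right).lt_of_ne hne⟩

theorem exists_isOpen_superset_derivedPts_mk_inter_lt {κ : Cardinal.{u}} (hκ : κ.IsRegular)
    {A : Set X} (hA : #A = κ) (hA' : #(derivedPts A) < κ) (hca : caPts A = ∅) :
    ∃ C, IsOpen C ∧ derivedPts A ⊆ C ∧ #(A ∩ C : Set X) < κ := by
  have hnot (x : derivedPts A) : (x : X) ∉ caPts A := hca ▸ notMem_empty _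
  choose U hUopen hxU hUA using fun x ↦ exists_isOpen_mk_inter_lt_of_notMem_caPts (hnot x)
  refine ⟨⋃ x, U x, isOpen_iUnion hUopen, fun x hx ↦ mem_iUnion.2 ⟨⟨x, hx⟩, hxU _⟩, ?_⟩
  rw [inter_iUnion]
  exact (card_iUnion_lt_iff_forall_of_isRegular hκ hA').2 fun x ↦
    inter_comm A (U x) ▸ hA ▸ hUA x

end DerivedSet

/-- If `κ` is regular and every subset of `X` of cardinality `κ` has an
accumulation point, then every `A ∈ [X]^κ` with `|A'| < κ` satisfies `A° ≠ ∅`. -/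
theorem stmt9 {X : Type u} [TopologicalSpace X] (κ : Cardinal.{u}) (hκ : κ.IsRegular)
    (hext : ∀ A : Set X, #A = κ → (derivedPts A).Nonempty) :
    ∀ A : Set X, #A = κ → #(derivedPts A) < κ → (caPts A).Nonempty := by
  intro A hA hA'
  by_contra hempty
  obtain ⟨C, hC, hA'C, hAC⟩ := exists_isOpen_superset_derivedPts_mk_inter_lt hκ hA hA'
    (not_nonempty_iff_eq_empty.1 hempty)
  have hB : #(A \ C : Set X) = κ := by
    rw [← sdiff_self_inter, mk_sdiff_eq_of_mk_lt (hA ▸ hκ.aleph0_le) (hA ▸ hAC), hA]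
  obtain ⟨y, hy⟩ := hext _ hB
  exact (disjoint_derivedPts_of_isOpen hC disjoint_sdiff_left).notMem_of_mem_left hy
    (hA'C (derivedPts_mono sdiff_subset hy))
end

section
/- Let κ be a regular cardinal and X a topological space such that every subset of X of cardinality κ has an accumulation point in X (i.e., ê(X) ≤ κ). If A ⊆ X has cardinality κ, |A°| < κ, and every subset B of A of cardinality κ has B° ≠ ∅, then there is a subset H ⊆ A° that is κ-approximated in X. -/
open Cardinal Set Topology

universe u

/-!
Split `A` into `κ` disjoint pieces of size `κ`. An equivalence relation on the pieces with
classes of size `< κ` yields `κ` disjoint cells (unions of classes), each of size `κ`; its core is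
the set of points that are complete accumulation points of every cell. If fewer than `κ` cells
have exactly the core as their set of complete accumulation points, then, as `|A°| < κ` and `κ`
is regular, some `w ∈ A°` outside the core is a complete accumulation point of `κ` many cells;
merging every other cell into one of these (at most one into each) puts `w` into the core.
Iterating transfinitely, with unions at limit stages, the core grows strictly inside `A°`, so
before stage `|A°|⁺ ≤ κ` some stage has `κ` such cells, which witness that its core is
`κ`-approximated.
-/

namespace KApproximation

open Function

variable {ι : Type u} {κ : Cardinal.{u}}

theorem mk_preimage_lt_of_isRegular {α β : Type u} (hκ : κ.IsRegular) {f : α → β}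
    (hf : ∀ b, #(f ⁻¹' {b}) < κ) {T : Set β} (hT : #T < κ) : #(f ⁻¹' T) < κ := by
  rw [← biUnion_preimage_singleton]
  exact (card_biUnion_lt_iff_forall_of_isRegular hκ hT).mpr fun b _ => hf b

theorem exists_retraction_injOn_compl {Q : Type u} (G : Set Q) (hG : #(Gᶜ : Set Q) ≤ #G) :
    ∃ m : Q → Q, (∀ q, m q ∈ G) ∧ (∀ g ∈ G, m g = g) ∧ Gᶜ.InjOn m := by
  classical
  obtain ⟨φ⟩ := (Cardinal.le_def _ _).mp hG
  refine ⟨fun q => if h : q ∈ G then q else φ ⟨q, h⟩, fun q => ?_, fun g hg => dif_pos hg,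
    fun q hq q' hq' h => ?_⟩
  · by_cases h : q ∈ G <;> simp [h]
  · simp only [dif_neg (show q ∉ G from hq), dif_neg (show q' ∉ G from hq')] at h
    exact congrArg Subtype.val (φ.injective (Subtype.val_injective h))

theorem _root_.Setoid.rel_iSup_iff_of_directed {α J : Type*} [Nonempty J] {r : J → Setoid α}
    (hr : Directed (· ≤ ·) r) {a b : α} : (⨆ j, r j) a b ↔ ∃ j, r j a b := by
  refine ⟨fun h => ?_, fun ⟨j, h⟩ => Setoid.le_def.mp (le_iSup r j) h⟩
  rw [iSup, Setoid.sSup_eq_eqvGen] at h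
  induction h with
  | rel x y hxy =>
    obtain ⟨_, ⟨j, rfl⟩, h⟩ := hxy
    exact ⟨j, h⟩
  | refl x => exact ⟨Classical.arbitrary J, (r _).refl' x⟩
  | symm x y _ ih =>
    obtain ⟨j, h⟩ := ih
    exact ⟨j, (r j).symm' h⟩
  | trans x y z _ _ ihxy ihyz =>
    obtain ⟨j, hj⟩ := ihxy
    obtain ⟨k, hk⟩ := ihyz
    obtain ⟨l, hjl, hkl⟩ := hr j k
    exact ⟨l, (r l).trans' (Setoid.le_def.mp hjl hj) (Setoid.le_def.mp hkl hk)⟩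

theorem card_le_of_ssubset_succ {Y : Type u} {o : Ordinal.{u}} {f : Ordinal.{u} → Set Y}
    (hf : Monotone f) {S : Set Y} (hS : ∀ β, f β ⊆ S)
    (hsucc : ∀ β < o, f β ⊂ f (Order.succ β)) : o.card ≤ #S := by
  have hnew : ∀ β : Iio o, ∃ y : S, (y : Y) ∈ f (Order.succ β.1) \ f β.1 := fun β => by
    obtain ⟨y, hy, hy'⟩ := exists_of_ssubset (hsucc β.1 β.2)
    exact ⟨⟨y, hS _ hy⟩, hy, hy'⟩
  choose g hg using hnew
  have hg_inj : Injective g := by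
    suffices ∀ β γ : Iio o, β < γ → g β ≠ g γ from fun β γ h =>
      by_contra fun hne => (lt_or_gt_of_ne hne).elim (this β γ · h) (this γ β · h.symm)
    intro β γ hβγ h
    exact (hg γ).2 (h ▸ hf (Order.succ_le_of_lt hβγ) (hg β).1)
  have := lift_mk_le_lift_mk_of_injective hg_inj
  rwa [mk_Iio_ordinal, lift_lift, lift_le] at this

def HasSmallClasses (κ : Cardinal.{u}) (r : Setoid ι) : Prop := ∀ i, #{j | r j i} < κ

theorem HasSmallClasses.preimage_mk_singleton {r : Setoid ι} (hr : HasSmallClasses κ r)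
    (q : Quotient r) : #(Quotient.mk r ⁻¹' {q}) < κ := by
  induction q using Quotient.inductionOn with
  | h i => simpa only [Set.preimage, mem_singleton_iff, Quotient.eq] using hr i

theorem HasSmallClasses.mk_quotient (hκ : κ.IsRegular) (hι : #ι = κ) {r : Setoid ι}
    (hr : HasSmallClasses κ r) : #(Quotient r) = κ := by
  refine le_antisymm (mk_quotient_le.trans hι.le) (not_lt.mp fun hQ => ?_)
  have := mk_preimage_lt_of_isRegular hκ hr.preimage_mk_singleton (T := univ) (by simpa using hQ)
  simp [hι] at this

theorem hasSmallClasses_bot (hκ : 1 < κ) : HasSmallClasses κ (⊥ : Setoid ι) := by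
  intro i
  simpa [Setoid.bot_def] using hκ

theorem hasSmallClasses_iSup (hκ : κ.IsRegular) {J : Type u} [Nonempty J] {r : J → Setoid ι}
    (hdir : Directed (· ≤ ·) r) (hJ : #J < κ) (hr : ∀ j, HasSmallClasses κ (r j)) :
    HasSmallClasses κ (⨆ j, r j) := by
  intro i
  have hsub : {k | (⨆ j, r j) k i} ⊆ ⋃ j, {k | r j k i} := fun k hk => by
    simpa using (Setoid.rel_iSup_iff_of_directed hdir).mp hk
  exact (mk_le_mk_of_subset hsub).trans_lt
    ((card_iUnion_lt_iff_forall_of_isRegular hκ hJ).mpr fun j => hr j i)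

/-- A limit stage is a directed union of fewer than `κ` earlier stages, so its classes stay
small by regularity. -/
theorem hasSmallClasses_transfiniteIterate (hκ : κ.IsRegular) {φ : Setoid ι → Setoid ι}
    (hle : ∀ r, r ≤ φ r) (hφ : ∀ r, HasSmallClasses κ r → HasSmallClasses κ (φ r))
    (β : Ordinal.{u}) (hβ : β.card < κ) :
    HasSmallClasses κ (transfiniteIterate φ β ⊥) := by
  induction β using SuccOrder.limitRecOn with
  | isMin β hβ0 =>
    rw [hβ0.eq_bot, transfiniteIterate_bot]
    exact hasSmallClasses_bot (one_lt_aleph0.trans_le hκ.aleph0_le)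
  | succ β _ ih =>
    rw [transfiniteIterate_succ _ _ _ (not_isMax β)]
    exact hφ _ (ih ((Ordinal.card_le_card (Order.le_succ β)).trans_lt hβ))
  | isSuccLimit δ hδ ih =>
    have : Nonempty δ.ToType := Ordinal.nonempty_toType_iff.mpr hδ.ne_bot
    rw [transfiniteIterate_limit _ _ _ hδ,
      ← (Ordinal.ToType.mk (o := δ)).symm.toEquiv.iSup_comp]
    refine hasSmallClasses_iSup hκ ?_ (by rwa [mk_toType]) fun x => ?_
    · exact ((monotone_transfiniteIterate φ ⊥ hle).comp
        (Subtype.mono_coe _ |>.comp (Ordinal.ToType.mk (o := δ)).symm.monotone)).directed_le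
    · set β := (Ordinal.ToType.mk (o := δ)).symm x
      exact ih β.1 β.2 ((Ordinal.card_le_card β.2.le).trans_lt hβ)

/-- Merge every class outside `G` into a class of `G`, at most one per class of `G`. -/
theorem HasSmallClasses.exists_le_forall_exists_rel_mk_mem (hκ : κ.IsRegular) {r : Setoid ι}
    (hr : HasSmallClasses κ r) {G : Set (Quotient r)} (hG : #(Gᶜ : Set (Quotient r)) ≤ #G) :
    ∃ r' : Setoid ι, r ≤ r' ∧ HasSmallClasses κ r' ∧ ∀ i, ∃ j, r' j i ∧ Quotient.mk r j ∈ G := by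
  obtain ⟨m, hmG, hm_id, hm_inj⟩ := exists_retraction_injOn_compl G hG
  refine ⟨Setoid.ker (m ∘ Quotient.mk r), fun i j hij => ?_, fun i => ?_, fun i => ?_⟩
  · exact congrArg m (Quotient.sound hij)
  · set y := m (Quotient.mk r i)
    have hcompl : (Gᶜ ∩ m ⁻¹' {y}).Subsingleton := fun a ha b hb =>
      hm_inj ha.1 hb.1 (ha.2.trans hb.2.symm)
    have hfin : (m ⁻¹' {y}).Finite := by
      refine ((finite_singleton y).union hcompl.finite).subset fun q hq => ?_
      by_cases hqG : q ∈ G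
      · exact Or.inl ((hm_id q hqG).symm.trans hq)
      · exact Or.inr ⟨hqG, hq⟩
    exact mk_preimage_lt_of_isRegular hκ hr.preimage_mk_singleton
      (hfin.lt_aleph0.trans_le hκ.aleph0_le)
  · refine ⟨(m (Quotient.mk r i)).out, ?_, by simpa using hmG _⟩
    simp [Setoid.ker_def, hm_id _ (hmG _)]

theorem exists_pairwise_disjoint_subsets_mk_eq {α : Type u} {A : Set α} (hA : ℵ₀ ≤ #A) :
    ∃ P : A → Set α, (∀ i, P i ⊆ A) ∧ (∀ i, #(P i) = #A) ∧ Pairwise (Disjoint on P) := by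
  obtain ⟨e⟩ : Nonempty (A × A ≃ A) := Cardinal.eq.mp (by simpa using mul_eq_self hA)
  refine ⟨fun i => range fun j => (e (i, j) : α), ?_, fun i => ?_, fun i i' hii' => ?_⟩
  · rintro i _ ⟨j, rfl⟩
    exact (e (i, j)).2
  · refine mk_range_eq _ fun j j' h => ?_
    simpa using e.injective (Subtype.val_injective h)
  · rw [onFun, Set.disjoint_left]
    rintro _ ⟨j, rfl⟩ ⟨j', h⟩
    exact hii' (congrArg Prod.fst (e.injective (Subtype.val_injective h))).symm

variable {X : Type u} {P : ι → Set X}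

def cell (P : ι → Set X) (r : Setoid ι) (q : Quotient r) : Set X :=
  ⋃ (i) (_ : Quotient.mk r i = q), P i

theorem subset_cell (r : Setoid ι) (i : ι) : P i ⊆ cell P r (Quotient.mk r i) :=
  subset_biUnion_of_mem (u := fun j => P j) (rfl : Quotient.mk r i = _)

theorem cell_mk_subset_cell_mk {r r' : Setoid ι} (h : r ≤ r') (i : ι) :
    cell P r (Quotient.mk r i) ⊆ cell P r' (Quotient.mk r' i) :=
  iUnion₂_subset fun _ hj => subset_biUnion_of_mem (u := fun j => P j)
    (Quotient.sound (Setoid.le_def.mp h (Quotient.exact hj)))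

theorem disjoint_cell (hP : Pairwise (Disjoint on P)) {r : Setoid ι} {q q' : Quotient r}
    (h : q ≠ q') : Disjoint (cell P r q) (cell P r q') := by
  refine disjoint_iUnion₂_left.mpr fun i hi => disjoint_iUnion₂_right.mpr fun j hj => hP ?_
  rintro rfl
  exact h (hi.symm.trans hj)

theorem cell_subset {A : Set X} (hPA : ∀ i, P i ⊆ A) (r : Setoid ι) (q : Quotient r) :
    cell P r q ⊆ A :=
  iUnion₂_subset fun j _ => hPA j

theorem mk_cell {A : Set X} (hPA : ∀ i, P i ⊆ A) (hPcard : ∀ i, #(P i) = #A) (r : Setoid ι)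
    (q : Quotient r) : #(cell P r q) = #A := by
  induction q using Quotient.inductionOn with
  | h i =>
    refine le_antisymm (mk_le_mk_of_subset (cell_subset hPA r _)) ?_
    exact (hPcard i).symm.le.trans (mk_le_mk_of_subset (subset_cell r i))

variable [TopologicalSpace X] {A : Set X}

theorem caPts_mono_of_mk_eq {B C : Set X} (hBC : B ⊆ C) (h : #B = #C) :
    caPts B ⊆ caPts C := by
  intro x hx U hU hxU
  refine le_antisymm (mk_le_mk_of_subset inter_subset_right) ?_
  calc #C = #(↥(U ∩ B)) := by rw [hx U hU hxU, h]
    _ ≤ #(↥(U ∩ C)) := mk_le_mk_of_subset (inter_subset_inter_right _ hBC)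

def core (P : ι → Set X) (r : Setoid ι) : Set X := ⋂ q, caPts (cell P r q)

def IsSettled (κ : Cardinal.{u}) (P : ι → Set X) (r : Setoid ι) : Prop :=
  κ ≤ #{q : Quotient r | caPts (cell P r q) = core P r}

open Classical in
noncomputable def grow (κ : Cardinal.{u}) (P : ι → Set X) (r : Setoid ι) : Setoid ι :=
  if h : ∃ r', r ≤ r' ∧ HasSmallClasses κ r' ∧ ¬ core P r' ⊆ core P r then h.choose else r

theorem le_grow (r : Setoid ι) : r ≤ grow κ P r := by
  unfold grow
  split_ifs with h
  exacts [h.choose_spec.1, le_rfl]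

theorem HasSmallClasses.grow {r : Setoid ι} (hr : HasSmallClasses κ r) :
    HasSmallClasses κ (grow κ P r) := by
  unfold KApproximation.grow
  split_ifs with h
  exacts [h.choose_spec.2.1, hr]

section
variable (hPA : ∀ i, P i ⊆ A) (hPcard : ∀ i, #(P i) = #A)
include hPA hPcard

theorem caPts_cell_subset (r : Setoid ι) (q : Quotient r) : caPts (cell P r q) ⊆ caPts A :=
  caPts_mono_of_mk_eq (cell_subset hPA r q) (mk_cell hPA hPcard r q)

theorem caPts_cell_mk_subset {r r' : Setoid ι} (h : r ≤ r') (i : ι) :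
    caPts (cell P r (Quotient.mk r i)) ⊆ caPts (cell P r' (Quotient.mk r' i)) :=
  caPts_mono_of_mk_eq (cell_mk_subset_cell_mk h i)
    (by rw [mk_cell hPA hPcard, mk_cell hPA hPcard])

theorem core_mono {r r' : Setoid ι} (h : r ≤ r') : core P r ⊆ core P r' := by
  refine subset_iInter fun q => ?_
  induction q using Quotient.inductionOn with
  | h i => exact (iInter_subset _ _).trans (caPts_cell_mk_subset hPA hPcard h i)

theorem core_subset_caPts [Nonempty ι] (r : Setoid ι) : core P r ⊆ caPts A :=
  (iInter_subset _ (Quotient.mk r (Classical.arbitrary ι))).trans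
    (caPts_cell_subset hPA hPcard r _)

variable (hκ : κ.IsRegular) (hι : #ι = κ) (hca : #(caPts A) < κ)
include hκ hι hca

/-- Pigeonhole: the κ many unsettled classes each contribute a point of `caPts A \ core`, and
there are fewer than κ such points. -/
theorem exists_not_mem_core_le_mk {r : Setoid ι} (hr : HasSmallClasses κ r)
    (hns : ¬ IsSettled κ P r) :
    ∃ w ∉ core P r, κ ≤ #{q : Quotient r | w ∈ caPts (cell P r q)} := by
  have hQ := hr.mk_quotient hκ hι
  have : Infinite (Quotient r) := infinite_iff.mpr (hQ ▸ hκ.aleph0_le)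
  have hunsettled : #{q : Quotient r | caPts (cell P r q) ≠ core P r} = κ :=
    hQ ▸ mk_compl_of_infinite _ (hQ ▸ not_le.mp hns)
  by_contra! hsmall
  have hcover : {q : Quotient r | caPts (cell P r q) ≠ core P r} ⊆
      ⋃ w ∈ caPts A \ core P r, {q | w ∈ caPts (cell P r q)} := fun q hq => by
    have hcore : core P r ⊆ caPts (cell P r q) := iInter_subset _ q
    obtain ⟨w, hw, hw'⟩ := exists_of_ssubset (hcore.ssubset_of_ne (Ne.symm hq))
    exact mem_biUnion ⟨caPts_cell_subset hPA hPcard r q hw, hw'⟩ hw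
  refine (mk_le_mk_of_subset hcover).not_gt ?_ |>.elim
  rw [hunsettled]
  exact (card_biUnion_lt_iff_forall_of_isRegular hκ
    ((mk_le_mk_of_subset sdiff_subset).trans_lt hca)).mpr fun w hw => hsmall w hw.2

theorem exists_le_not_core_subset {r : Setoid ι} (hr : HasSmallClasses κ r)
    (hns : ¬ IsSettled κ P r) :
    ∃ r', r ≤ r' ∧ HasSmallClasses κ r' ∧ ¬ core P r' ⊆ core P r := by
  obtain ⟨w, hw, hG⟩ := exists_not_mem_core_le_mk hPA hPcard hκ hι hca hr hns
  have hGc : #({q : Quotient r | w ∈ caPts (cell P r q)}ᶜ : Set _) ≤ _ :=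
    ((mk_le_mk_of_subset (subset_univ _)).trans (by rw [mk_univ, hr.mk_quotient hκ hι])).trans hG
  obtain ⟨r', hle, hr', hmeet⟩ := hr.exists_le_forall_exists_rel_mk_mem hκ hGc
  refine ⟨r', hle, hr', fun hsub => hw (hsub (mem_iInter.mpr fun q => ?_))⟩
  induction q using Quotient.inductionOn with
  | h i =>
    obtain ⟨j, hji, hj⟩ := hmeet i
    rw [← Quotient.sound hji]
    exact caPts_cell_mk_subset hPA hPcard hle j hj

theorem core_ssubset_core_grow {r : Setoid ι} (hr : HasSmallClasses κ r)
    (hns : ¬ IsSettled κ P r) : core P r ⊂ core P (grow κ P r) := by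
  have h := exists_le_not_core_subset hPA hPcard hκ hι hca hr hns
  refine (core_mono hPA hPcard (le_grow r)).ssubset_of_not_subset ?_
  rw [grow, dif_pos h]
  exact h.choose_spec.2.2

end

theorem IsSettled.isKApproximated (hPA : ∀ i, P i ⊆ A) (hPdisj : Pairwise (Disjoint on P))
    (hκ : κ ≠ 0) (hι : #ι = κ) (hA : #A = κ) (hPcard : ∀ i, #(P i) = #A)
    (hB : ∀ B ⊆ A, #B = κ → (caPts B).Nonempty) {r : Setoid ι} (hs : IsSettled κ P r) :
    IsKApproximated κ (core P r) := by
  set T := {q : Quotient r | caPts (cell P r q) = core P r}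
  have hT : #T = κ := (mk_set_le T |>.trans (mk_quotient_le.trans hι.le)).antisymm hs
  have hcell : ∀ q, #(cell P r q) = κ := fun q => (mk_cell hPA hPcard r q).trans hA
  have hinj : InjOn (cell P r) T := fun q _ q' _ h => by_contra fun hne => by
    have := disjoint_cell hPdisj hne
    rw [h, disjoint_self, bot_eq_empty] at this
    exact hκ (by simpa [this] using (hcell q').symm)
  refine ⟨cell P r '' T, by rw [mk_image_eq_of_injOn _ _ hinj, hT], ?_, ?_⟩
  · rintro _ ⟨q, -, rfl⟩ _ ⟨q', -, rfl⟩ hne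
    exact disjoint_cell hPdisj fun h => hne (h ▸ rfl)
  · rintro _ ⟨q, hq, rfl⟩
    exact ⟨hcell q, fun Y hY hYc => hB Y (hY.trans (cell_subset hPA r q)) hYc, hq⟩

end KApproximation

open KApproximation in
theorem stmt10_general {X : Type u} [TopologicalSpace X] (κ : Cardinal.{u}) (hκ : κ.IsRegular)
    (A : Set X) (hA : #A = κ) (hca : #(caPts A) < κ)
    (hB : ∀ B : Set X, B ⊆ A → #B = κ → (caPts B).Nonempty) :
    ∃ H : Set X, H ⊆ caPts A ∧ IsKApproximated κ H := by
  obtain ⟨P, hPA, hPcard, hPdisj⟩ := exists_pairwise_disjoint_subsets_mk_eq (hA ▸ hκ.aleph0_le)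
  have : Nonempty A := mk_ne_zero_iff.mp (hA ▸ hκ.pos.ne')
  let stage (β : Ordinal.{u}) : Setoid A := transfiniteIterate (grow κ P) β ⊥
  have hsmall : ∀ β : Ordinal.{u}, β.card < κ → HasSmallClasses κ (stage β) :=
    hasSmallClasses_transfiniteIterate hκ le_grow fun _ => HasSmallClasses.grow
  have hcore : Monotone (core P ∘ stage) := fun β γ h =>
    core_mono hPA hPcard (monotone_transfiniteIterate _ _ le_grow h)
  have hθ : ∀ β < (Order.succ #(caPts A)).ord, β.card < κ := fun β hβ =>
    (lt_ord.mp hβ).trans_le (Order.succ_le_of_lt hca)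
  obtain ⟨β, hβ, hsettled⟩ : ∃ β < (Order.succ #(caPts A)).ord, IsSettled κ P (stage β) := by
    by_contra! hns
    have hle := card_le_of_ssubset_succ hcore (fun β => core_subset_caPts hPA hPcard _)
      fun β hβ => by
        change core P (stage β) ⊂ core P (transfiniteIterate _ (Order.succ β) ⊥)
        rw [transfiniteIterate_succ _ _ _ (not_isMax β)]
        exact core_ssubset_core_grow hPA hPcard hκ hA hca (hsmall β (hθ β hβ)) (hns β hβ)
    rw [card_ord] at hle
    exact (Order.lt_succ _).not_ge hle
  exact ⟨_, core_subset_caPts hPA hPcard _,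
    hsettled.isKApproximated hPA hPdisj hκ.pos.ne' hA hA hPcard hB⟩

/-- If `κ` is regular, every subset of `X` of cardinality `κ` has an
accumulation point, and `A ∈ [X]^κ` satisfies `|A°| < κ` and `B° ≠ ∅` for all
`B ∈ [A]^κ`, then some `H ⊆ A°` is `κ`-approximated in `X`. -/
theorem stmt10 {X : Type u} [TopologicalSpace X] (κ : Cardinal.{u}) (hκ : κ.IsRegular)
    (hext : ∀ A : Set X, #A = κ → (derivedPts A).Nonempty)
    (A : Set X) (hA : #A = κ) (hca : #(caPts A) < κ)
    (hB : ∀ B : Set X, B ⊆ A → #B = κ → (caPts B).Nonempty) :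
    ∃ H : Set X, H ⊆ caPts A ∧ IsKApproximated κ H :=
  stmt10_general κ hκ A hA hca hB
end

section
/- Let X be a topological space whose cardinality κ = |X| is a regular cardinal, and let H be a pairwise disjoint family of subsets of X, each κ-approximated in X, such that ⋃H is dense in X. Then X is κ-resolvable. -/
open Cardinal Set Topology

universe u

open Function

/-!
Enumerate every approximating family as `A H α` (`H ∈ ℋ`, `α < κ`). Two of these sets meet in
fewer than `κ` points: for the same `H` they are disjoint, and for `H ≠ H'` a common part of size
`κ` would have a complete accumulation point lying in `H ∩ H'`. Since there are only `κ` of them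
and `κ` is regular, removing from each set its intersection with its predecessors in a well-order
of type `κ` costs fewer than `κ` points, which leaves disjoint sets `B H α`. Every point of `H` is a
complete accumulation point of `A H α`, so `B H α` meets each open set meeting `H`; hence
`⋃ H, B H α` is dense for every `α`, and these `κ` sets are pairwise disjoint.
-/

theorem Set.PairwiseDisjoint.mk_le_of_nonempty {α : Type u} {ℋ : Set (Set α)}
    (h : ℋ.PairwiseDisjoint id) (hne : ∀ H ∈ ℋ, H.Nonempty) : #ℋ ≤ #α := by
  choose f hf using fun H : ℋ => hne H H.2
  refine mk_le_of_injective (f := f) fun H H' hHH' => Subtype.ext ?_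
  by_contra hne'
  exact disjoint_left.1 (h H.2 H'.2 hne') (hf H) (hHH' ▸ hf H')

theorem exists_pairwise_disjoint_mk_diff_lt {α P : Type u} {κ : Cardinal.{u}} (hκ : κ.IsRegular)
    (hP : #P ≤ κ) {A : P → Set α} (hA : Pairwise fun p q => #(A p ∩ A q : Set α) < κ) :
    ∃ B : P → Set α, Pairwise (Disjoint on B) ∧ ∀ p, #(A p \ B p : Set α) < κ := by
  obtain ⟨e⟩ : Nonempty (P ↪ κ.ord.ToType) := by rwa [← le_def, mk_ord_toType]
  refine ⟨fun p => A p \ ⋃ r : {r // e r < e p}, A r, ?_, fun p => ?_⟩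
  · have hlt : ∀ p q, e q < e p → Disjoint (A p \ ⋃ r : {r // e r < e p}, A r) (A q) :=
      fun p q hqp => disjoint_sdiff_left.mono_right (subset_iUnion_of_subset ⟨q, hqp⟩ subset_rfl)
    intro p q hpq
    rcases (e.injective.ne hpq).lt_or_gt with hpq | hqp
    · exact (hlt q p hpq).symm.mono_left sdiff_subset
    · exact (hlt p q hqp).mono_right sdiff_subset
  · have hpred : #{q // e q < e p} < κ :=
      (mk_le_of_injective (f := fun q : {q // e q < e p} => (⟨e q, q.2⟩ : Iio (e p)))
        fun q q' h => Subtype.ext (e.injective (congrArg Subtype.val h))).trans_lt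
        ((mk_Iio_lt _ (by simp)).trans_eq (mk_ord_toType κ))
    rw [sdiff_sdiff_right_self, inter_iUnion, card_iUnion_lt_iff_forall_of_isRegular hκ hpred]
    exact fun q => hA (ne_of_apply_ne e q.2.ne')

section CompleteAccumulation

variable {X : Type u} [TopologicalSpace X]

theorem caPts_subset_caPts_of_mk_eq {Y A : Set X} (hYA : Y ⊆ A) (hcard : #Y = #A) :
    caPts Y ⊆ caPts A := fun _ hx U hU hxU =>
  le_antisymm (mk_le_mk_of_subset inter_subset_right) <| calc
    #A = #(U ∩ Y : Set X) := hcard.symm.trans (hx U hU hxU).symm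
    _ ≤ #(U ∩ A : Set X) := mk_le_mk_of_subset (inter_subset_inter_right _ hYA)

theorem mk_inter_lt_of_disjoint_caPts {κ : Cardinal.{u}} {A A' : Set X} (hA : #A = κ)
    (hA' : #A' = κ) (hcap : ∀ Y ⊆ A, #Y = κ → (caPts Y).Nonempty)
    (hdisj : Disjoint (caPts A) (caPts A')) : #(A ∩ A' : Set X) < κ := by
  refine (hA ▸ mk_le_mk_of_subset inter_subset_left).lt_of_ne fun heq => ?_
  obtain ⟨x, hx⟩ := hcap _ inter_subset_left heq
  exact disjoint_left.1 hdisj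
    (caPts_subset_caPts_of_mk_eq inter_subset_left (heq.trans hA.symm) hx)
    (caPts_subset_caPts_of_mk_eq inter_subset_right (heq.trans hA'.symm) hx)

theorem dense_iUnion_of_subset_caPts {ι : Type*} {H S B : ι → Set X} (hdense : Dense (⋃ i, H i))
    (hH : ∀ i, H i ⊆ caPts (S i)) (hB : ∀ i, #(S i \ B i : Set X) < #(S i)) :
    Dense (⋃ i, B i) := by
  refine dense_iff_inter_open.2 fun U hU hUne => ?_
  obtain ⟨x, hxU, hx⟩ := hdense.inter_open_nonempty U hU hUne
  obtain ⟨i, hxi⟩ := mem_iUnion.1 hx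
  by_contra hempty
  have hsub : U ∩ S i ⊆ S i \ B i := fun y hy =>
    ⟨hy.2, fun hyB => hempty ⟨y, hy.1, mem_iUnion.2 ⟨i, hyB⟩⟩⟩
  exact ((mk_le_mk_of_subset hsub).trans_lt (hB i)).ne (hH i hxi U hU hxU)

theorem isLamResolvable_of_pairwise_disjoint_dense [Nonempty X] {ι : Type u} {lam : Cardinal.{u}}
    (hι : #ι = lam) {D : ι → Set X} (hD : ∀ i, Dense (D i)) (hdisj : Pairwise (Disjoint on D)) :
    IsLamResolvable X lam := by
  have hinj : Injective D := fun i j hij => by_contra fun hne =>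
    (hD i).nonempty.ne_empty <| disjoint_self.1 <| by simpa only [onFun, hij] using hdisj hne
  exact ⟨range D, (mk_range_eq D hinj).trans hι, forall_mem_range.2 hD, hdisj.range_pairwise⟩

variable {κ : Cardinal.{u}}

theorem IsKApproximated.exists_indexed {H : Set X} (h : IsKApproximated κ H) {ι : Type u}
    (hι : #ι = κ) : ∃ A : ι → Set X, Pairwise (Disjoint on A) ∧
      ∀ α, #(A α) = κ ∧ (∀ Y ⊆ A α, #Y = κ → (caPts Y).Nonempty) ∧ caPts (A α) = H := by
  obtain ⟨𝒜, h𝒜, hdisj, hA⟩ := h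
  obtain ⟨e⟩ : Nonempty (ι ≃ 𝒜) := Cardinal.eq.1 (hι.trans h𝒜.symm)
  exact ⟨fun α => e α, hdisj.on_injective (Subtype.coe_injective.comp e.injective)
    fun α => (e α).2, fun α => hA _ (e α).2⟩

theorem IsKApproximated.nonempty {H : Set X} (h : IsKApproximated κ H) (hκ : κ ≠ 0) :
    H.Nonempty := by
  obtain ⟨A, -, hA⟩ := h.exists_indexed (mk_out κ)
  have : Nonempty κ.out := mk_ne_zero_iff.1 ((mk_out κ).trans_ne hκ)
  obtain ⟨hcard, hcap, hH⟩ := hA (Classical.arbitrary κ.out)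
  exact hH ▸ hcap _ subset_rfl hcard

theorem pairwise_mk_inter_lt_of_caPts_eq {J ι : Type*} (hκ : 0 < κ) {H : J → Set X}
    (hH : Pairwise (Disjoint on H)) {A : J → ι → Set X} (hAdisj : ∀ j, Pairwise (Disjoint on (A j)))
    (hA : ∀ j α, #(A j α) = κ ∧ (∀ Y ⊆ A j α, #Y = κ → (caPts Y).Nonempty) ∧ caPts (A j α) = H j) :
    Pairwise fun p q : J × ι => #(A p.1 p.2 ∩ A q.1 q.2 : Set X) < κ := by
  rintro ⟨j, α⟩ ⟨j', β⟩ hne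
  by_cases hj : j = j'
  · subst hj
    have hαβ : α ≠ β := fun h => hne (h ▸ rfl)
    simpa [(hAdisj j hαβ).inter_eq] using hκ
  · obtain ⟨hcard, hcap, hcaPts⟩ := hA j α
    obtain ⟨hcard', -, hcaPts'⟩ := hA j' β
    exact mk_inter_lt_of_disjoint_caPts hcard hcard' hcap (hcaPts ▸ hcaPts' ▸ hH hj)

end CompleteAccumulation

/-- If `|X| = κ` is regular and `ℋ` is a pairwise disjoint family of
`κ`-approximated subsets of `X` with dense union, then `X` is `κ`-resolvable. -/
theorem stmt11 {X : Type u} [TopologicalSpace X] (κ : Cardinal.{u})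
    (hκ : κ.IsRegular) (hX : #X = κ) (ℋ : Set (Set X))
    (hdisj : ℋ.PairwiseDisjoint id)
    (happ : ∀ H ∈ ℋ, IsKApproximated κ H)
    (hdense : Dense (⋃₀ ℋ)) :
    IsLamResolvable X κ := by
  have : Nonempty X := mk_ne_zero_iff.1 (hX.trans_ne hκ.pos.ne')
  choose A hAdisj hA using fun H : ℋ => (happ H H.2).exists_indexed (mk_out κ)
  have hsmall := pairwise_mk_inter_lt_of_caPts_eq hκ.pos
    (hdisj.on_injective Subtype.coe_injective Subtype.prop) hAdisj hA
  have hcard : #(ℋ × κ.out) ≤ κ := by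
    rw [mk_prod, lift_id, lift_id, mk_out]
    exact mul_le_of_le hκ.aleph0_le
      (hX ▸ hdisj.mk_le_of_nonempty fun H hH => (happ H hH).nonempty hκ.pos.ne') le_rfl
  obtain ⟨B, hBdisj, hBdiff⟩ := exists_pairwise_disjoint_mk_diff_lt hκ hcard hsmall
  refine isLamResolvable_of_pairwise_disjoint_dense (mk_out κ)
    (D := fun α => ⋃ H : ℋ, B (H, α)) (fun α => ?_) fun α β hαβ => ?_
  · refine dense_iUnion_of_subset_caPts (sUnion_eq_iUnion ▸ hdense)
      (S := fun H => A H α) (fun H => (hA H α).2.2.symm.subset) fun H => ?_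
    rw [(hA H α).1]
    exact hBdiff (H, α)
  · simp only [onFun, disjoint_iUnion_left, disjoint_iUnion_right]
    exact fun H H' => hBdisj fun h => hαβ (congrArg Prod.snd h)
end

section
/- Let κ ≤ λ be infinite cardinals with κ regular, and let X be a topological space with |X| = λ. Then X has a chain decomposition ⟨X_α : α < cf(λ)⟩ of length cf(λ) such that |X_α| < λ for every α < cf(λ) and, for each α < cf(λ), X_α ∩ cl_{<κ}(X \ X_α) ⊆ cl_{<κ}(X_{α+1} \ X_α), where cl_{<κ} denotes the <κ-closure. -/
/-!
Well-order `X` in type `λ`; a cofinal sequence of length `cf(λ)` cuts it into `cf(λ)` pieces of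
size `< λ`. Build `X_α` by continuous transfinite recursion, putting into `X_{α+1}` the `α`-th
piece together with, for each `x ∈ X_α` in the `<κ`-closure of `X \ X_α`, a set of `< κ` points
of `X \ X_α` with `x` in its closure; these witnesses lie in `X_{α+1} \ X_α`. Sizes stay `< λ`:
as `κ ≤ λ` is regular, fewer than `λ` witness sets of size `< κ` have fewer than `λ` points, and
at limits below `cf(λ)` we take unions of fewer than `cf(λ)` sets of size `< λ`.
-/

open Cardinal Set Topology

universe u

theorem Order.exists_ordinal_seq_cofinal (α : Type u) [Preorder α] [Nonempty α] :
    ∃ φ : Ordinal.{u} → α, ∀ t, ∃ a < (Order.cof α).ord, t ≤ φ a := by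
  obtain ⟨s, hs, hcard⟩ := Order.exists_cof_eq α
  obtain ⟨ψ⟩ : Nonempty ((Order.cof α).ord.ToType ≃ s) := Cardinal.eq.1 (by simp [hcard])
  refine ⟨fun a => if h : a ∈ Iio (Order.cof α).ord then ψ (Ordinal.ToType.mk ⟨a, h⟩)
    else Classical.arbitrary α, fun t => ?_⟩
  obtain ⟨b, hb, htb⟩ := hs t
  set i := (ψ.symm ⟨b, hb⟩).toOrd
  refine ⟨i, i.2, ?_⟩
  beta_reduce
  rw [dif_pos i.2]
  simpa [i] using htb

theorem exists_cover_cof_mk_lt (α : Type u) (hα : ℵ₀ ≤ #α) :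
    ∃ g : Ordinal.{u} → Set α, (∀ a, #(g a) < #α) ∧ ∀ x, ∃ a < (#α).ord.cof.ord, x ∈ g a := by
  obtain ⟨_, _, hord⟩ := Cardinal.exists_ord_eq_type_lt α
  have : Nonempty α := Cardinal.mk_ne_zero_iff.1 (aleph0_pos.trans_le hα).ne'
  obtain ⟨φ, hφ⟩ := Order.exists_ordinal_seq_cofinal α
  refine ⟨fun a => Iic (φ a), fun a => mk_Iic_lt _ hord hα, fun x => ?_⟩
  rw [hord, Ordinal.cof_type]
  exact hφ x

theorem Cardinal.mk_biUnion_lt_of_lt_cof_ord {α : Type u} {lam : Cardinal.{u}} (hlam : ℵ₀ ≤ lam)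
    {o : Ordinal.{u}} (ho : o < lam.ord.cof.ord) {A : Ordinal.{u} → Set α}
    (hA : ∀ a < o, #(A a) < lam) : #(⋃ a ∈ Iio o, A a) < lam := by
  have hcof : #o.ToType < lam.ord.cof := by rwa [mk_toType, ← lt_ord]
  have hre : ⋃ a ∈ Iio o, A a = ⋃ i : o.ToType, A i.toOrd := by
    rw [biUnion_eq_iUnion, ← Ordinal.ToType.mk.symm.surjective.iUnion_comp]
  rw [hre]
  refine (mk_iUnion_le _).trans_lt (mul_lt_of_lt hlam (hcof.trans_le (Ordinal.cof_ord_le lam)) ?_)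
  exact iSup_lt_of_lt_cof_ord hcof fun i => hA _ i.toOrd.2

theorem Cardinal.mk_biUnion_lt_of_isRegular {ι α : Type u} {κ lam : Cardinal.{u}}
    (hκ : κ.IsRegular) (hκlam : κ ≤ lam) {s : Set ι} (hs : #s < lam) {A : ι → Set α}
    (hA : ∀ i, #(A i) < κ) : #(⋃ i ∈ s, A i) < lam := by
  refine (mk_biUnion_le _ _).trans_lt (mul_lt_of_lt (hκ.aleph0_le.trans hκlam) hs ?_)
  rcases hκlam.lt_or_eq with hlt | rfl
  · exact (ciSup_le' fun i : s => (hA i).le).trans_lt hlt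
  · exact iSup_lt_of_lt_cof_ord (hs.trans_eq hκ.cof_ord.symm) fun i => hA i

section ContinuousChain

variable {X : Type u}

noncomputable def continuousChain (step : Ordinal.{u} → Set X → Set X) (o : Ordinal.{u}) :
    Set X :=
  Ordinal.limitRecOn o ∅ step fun o _ ih => ⋃ a : Iio o, ih a a.2

variable (step : Ordinal.{u} → Set X → Set X)

@[simp]
theorem continuousChain_zero : continuousChain step 0 = ∅ :=
  Ordinal.limitRecOn_zero _ _ _

theorem continuousChain_add_one (a : Ordinal.{u}) :
    continuousChain step (a + 1) = step a (continuousChain step a) :=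
  Ordinal.limitRecOn_add_one _ _ _ _

theorem continuousChain_of_isSuccLimit {o : Ordinal.{u}} (ho : Order.IsSuccLimit o) :
    continuousChain step o = ⋃ a ∈ Iio o, continuousChain step a := by
  rw [biUnion_eq_iUnion]
  exact Ordinal.limitRecOn_limit _ _ _ _ ho

variable {step}

theorem continuousChain_mono (hstep : ∀ a A, A ⊆ step a A) :
    Monotone (continuousChain step) := by
  intro a b hab
  induction b using Ordinal.limitRecOn with
  | zero => rw [nonpos_iff_eq_zero.1 hab]
  | add_one b ih =>
    rcases hab.eq_or_lt with rfl | hab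
    · rfl
    · rw [continuousChain_add_one]
      exact (ih (Order.lt_add_one_iff.1 hab)).trans (hstep b _)
  | limit b hb _ =>
    rcases hab.eq_or_lt with rfl | hab
    · rfl
    · rw [continuousChain_of_isSuccLimit step hb]
      exact subset_biUnion_of_mem (u := continuousChain step) hab

theorem isChainDecomp_continuousChain (hstep : ∀ a A, A ⊆ step a A) (β : Ordinal.{u}) :
    IsChainDecomp β (continuousChain step) (⋃ a ∈ Iio β, continuousChain step a) := by
  refine ⟨fun a b hab _ => continuousChain_mono hstep hab, ?_, rfl⟩
  rintro δ - (rfl | hδ)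
  · simp
  · exact continuousChain_of_isSuccLimit step hδ

theorem mk_continuousChain_lt {lam : Cardinal.{u}} (hlam : ℵ₀ ≤ lam)
    (hstep : ∀ a (A : Set X), #A < lam → #(step a A) < lam) {o : Ordinal.{u}}
    (ho : o < lam.ord.cof.ord) : #(continuousChain step o) < lam := by
  induction o using Ordinal.limitRecOn with
  | zero => simpa using aleph0_pos.trans_le hlam
  | add_one a ih =>
    rw [continuousChain_add_one]
    exact hstep a _ (ih ((lt_add_one a).trans ho))
  | limit o hlim ih =>
    rw [continuousChain_of_isSuccLimit step hlim]
    exact mk_biUnion_lt_of_lt_cof_ord hlam ho fun a ha => ih a ha (ha.trans ho)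

end ContinuousChain

section SmallClosureWitness

variable {X : Type u} [TopologicalSpace X] {κ : Cardinal.{u}}

theorem mem_smallClosure_iff {Y : Set X} {x : X} :
    x ∈ smallClosure κ Y ↔ ∃ S ⊆ Y, #S < κ ∧ x ∈ closure S := by
  simp [smallClosure, and_assoc]

open scoped Classical in
noncomputable def smallClosureWitness (κ : Cardinal.{u}) (Y : Set X) (x : X) : Set X :=
  if h : x ∈ smallClosure κ Y then (mem_smallClosure_iff.1 h).choose else ∅

theorem smallClosureWitness_spec {Y : Set X} {x : X} (h : x ∈ smallClosure κ Y) :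
    smallClosureWitness κ Y x ⊆ Y ∧ #(smallClosureWitness κ Y x) < κ ∧
      x ∈ closure (smallClosureWitness κ Y x) := by
  rw [smallClosureWitness, dif_pos h]
  exact (mem_smallClosure_iff.1 h).choose_spec

theorem mk_smallClosureWitness_lt (hκ : 0 < κ) (Y : Set X) (x : X) :
    #(smallClosureWitness κ Y x) < κ := by
  by_cases h : x ∈ smallClosure κ Y
  · exact (smallClosureWitness_spec h).2.1
  · simpa [smallClosureWitness, h] using hκ

theorem inter_smallClosure_compl_subset {A B : Set X}
    (hB : ⋃ x ∈ A, smallClosureWitness κ (univ \ A) x ⊆ B) :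
    A ∩ smallClosure κ (univ \ A) ⊆ smallClosure κ (B \ A) := by
  rintro x ⟨hxA, hx⟩
  obtain ⟨hsub, hcard, hcl⟩ := smallClosureWitness_spec hx
  refine mem_smallClosure_iff.2 ⟨_, fun y hy => ⟨?_, (hsub hy).2⟩, hcard, hcl⟩
  exact hB (mem_biUnion hxA hy)

end SmallClosureWitness

theorem stmt13_general {X : Type u} [TopologicalSpace X] (κ lam : Cardinal.{u})
    (hκ : κ.IsRegular) (hkl : κ ≤ lam) (hX : #X = lam) :
    ∃ f : Ordinal.{u} → Set X,
      IsChainDecomp lam.ord.cof.ord f (Set.univ : Set X) ∧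
      (∀ a ∈ Set.Iio lam.ord.cof.ord, #(f a) < lam) ∧
      (∀ a ∈ Set.Iio lam.ord.cof.ord,
        f a ∩ smallClosure κ (Set.univ \ f a) ⊆ smallClosure κ (f (a + 1) \ f a)) := by
  subst hX
  have hinf : ℵ₀ ≤ #X := hκ.aleph0_le.trans hkl
  obtain ⟨g, hg_card, hg_cover⟩ := exists_cover_cof_mk_lt X hinf
  let step (a : Ordinal.{u}) (A : Set X) : Set X :=
    A ∪ g a ∪ ⋃ x ∈ A, smallClosureWitness κ (univ \ A) x
  have hstep : ∀ a A, A ⊆ step a A := fun _ _ => subset_union_left.trans subset_union_left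
  have hθ : Order.IsSuccLimit (#X).ord.cof.ord :=
    isSuccLimit_ord <|
      Ordinal.aleph0_le_cof_iff.2 (Ordinal.one_lt_cof_iff.2 (isSuccLimit_ord hinf))
  have hcover : ⋃ a ∈ Iio (#X).ord.cof.ord, continuousChain step a = Set.univ := by
    refine eq_univ_of_forall fun x => ?_
    obtain ⟨a, ha, hx⟩ := hg_cover x
    refine mem_biUnion (Order.succ_eq_add_one a ▸ hθ.succ_lt ha) ?_
    rw [continuousChain_add_one]
    exact Or.inl (Or.inr hx)
  refine ⟨continuousChain step, hcover ▸ isChainDecomp_continuousChain hstep _,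
    fun a ha => mk_continuousChain_lt hinf (fun a A hA => ?_) ha, fun a _ => ?_⟩
  · have hwit := mk_biUnion_lt_of_isRegular hκ hkl hA
      fun x => mk_smallClosureWitness_lt hκ.pos (univ \ A) x
    exact (mk_union_le _ _).trans_lt (add_lt_of_lt hinf
      ((mk_union_le _ _).trans_lt (add_lt_of_lt hinf hA (hg_card a))) hwit)
  · rw [continuousChain_add_one]
    exact inter_smallClosure_compl_subset subset_union_right

/-- If `κ ≤ λ` are infinite cardinals with `κ` regular and `|X| = λ`,
then `X` has a chain decomposition `⟨X_α : α < cf(λ)⟩` with `|X_α| < λ` and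
`X_α ∩ cl_{<κ}(X \\ X_α) ⊆ cl_{<κ}(X_{α+1} \\ X_α)` for all `α < cf(λ)`. -/
theorem stmt13 {X : Type u} [TopologicalSpace X] (κ lam : Cardinal.{u})
    (hκ : κ.IsRegular) (hlam : ℵ₀ ≤ lam) (hkl : κ ≤ lam) (hX : #X = lam) :
    ∃ f : Ordinal.{u} → Set X,
      IsChainDecomp lam.ord.cof.ord f (Set.univ : Set X) ∧
      (∀ a ∈ Set.Iio lam.ord.cof.ord, #(f a) < lam) ∧
      (∀ a ∈ Set.Iio lam.ord.cof.ord,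
        f a ∩ smallClosure κ (Set.univ \ f a) ⊆ smallClosure κ (f (a + 1) \ f a)) :=
  stmt13_general κ lam hκ hkl hX
end

section
/- Let κ be an infinite cardinal and X a regular κ⁺-compact topological space with |X| = Δ(X) = κ⁺ which has no subset that is κ⁺-approximated in X. Then for every subset A of X of cardinality κ⁺, the set A° of complete accumulation points of A, with the subspace topology, is a regular κ⁺-compact space satisfying |A°| = Δ(A°) = κ⁺. -/
open Cardinal Set Topology

universe u

/-!
Suppose some `B` with `|B| = κ⁺` had `|B°| ≤ κ`. Split `B` into `κ⁺` disjoint blocks of size `κ⁺`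
and glue blocks along equivalence relations on the index set whose classes have size `≤ κ`; the
glued pieces still have size `κ⁺`. The points `D` seen (as complete accumulation points) by `κ⁺`
many pieces lie in `B°`, so `|D| ≤ κ`, and by merging, for each of `κ⁺` labels, one piece seeing
each point of `D`, we get `κ⁺` pieces that all see `closure D`. Iterating transfinitely (with unions
at limits, which keep the classes small) the sets `D` increase inside `B°`, so the iteration
stabilizes before stage `κ⁺`. There all but `κ` of the merged pieces have exactly `D` as their set
of complete accumulation points, so `D` is `κ⁺`-approximated.

Hence `|A°| = κ⁺` whenever `|A| = κ⁺`; by regularity every nonempty open subset of `A°` contains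
`A'°` for some `A' ⊆ A` with `|A'| = κ⁺`, which gives `Δ(A°) = κ⁺`.
-/

section CompleteAccumulationPoints

variable {X : Type u} [TopologicalSpace X]

theorem isClosed_caPts (A : Set X) : IsClosed (caPts A) := by
  rw [← isOpen_compl_iff, isOpen_iff_forall_mem_open]
  intro x hx
  simp only [mem_compl_iff, caPts, mem_ofPred_eq, not_forall] at hx
  obtain ⟨U, hU, hxU, hcard⟩ := hx
  exact ⟨U, fun y hy hall => hcard (hall U hU hy), hU, hxU⟩

theorem caPts_subset_caPts {S T : Set X} (hST : S ⊆ T) (hc : #T ≤ #S) : caPts S ⊆ caPts T :=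
  fun _ hx U hU hxU => le_antisymm (mk_le_mk_of_subset inter_subset_right) <|
    calc #T ≤ #S := hc
      _ = #(↥(U ∩ S)) := (hx U hU hxU).symm
      _ ≤ #(↥(U ∩ T)) := mk_le_mk_of_subset (inter_subset_inter_right _ hST)

theorem caPts_subset_closure {A : Set X} (hA : A.Nonempty) : caPts A ⊆ closure A := by
  intro x hx
  rw [mem_closure_iff]
  intro U hU hxU
  exact mk_set_ne_zero_iff.mp ((hx U hU hxU).trans_ne (mk_set_ne_zero_iff.mpr hA))

theorem caPts_subtype {S : Set X} (A : Set S) :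
    caPts A = Subtype.val ⁻¹' caPts (Subtype.val '' A) := by
  have hcard (V : Set X) : #↥((Subtype.val ⁻¹' V) ∩ A) = #↥(V ∩ Subtype.val '' A) := by
    rw [← mk_image_eq Subtype.val_injective, image_inter Subtype.val_injective,
      Subtype.image_preimage_coe, inter_assoc,
      inter_eq_right.mpr (inter_subset_right.trans (Subtype.coe_image_subset S A))]
  ext x
  simp only [caPts, mem_ofPred_eq, mem_preimage, mk_image_eq Subtype.val_injective]
  constructor
  · intro h V hV hxV
    rw [← hcard, h _ (hV.preimage continuous_subtype_val) hxV]
  · intro h U hU hxU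
    obtain ⟨V, hV, rfl⟩ := isOpen_induced_iff.mp hU
    rw [hcard, h V hV hxU]

theorem LamCompactSpace.subtype {lam : Cardinal.{u}} (h : LamCompactSpace X lam)
    (hlam : lam ≠ 0) {S : Set X} (hS : IsClosed S) : LamCompactSpace S lam := by
  intro A hA
  have hcard : #(Subtype.val '' A) = lam := by rw [mk_image_eq Subtype.val_injective, hA]
  obtain ⟨x, hx⟩ := h _ hcard
  have hne : (Subtype.val '' A).Nonempty := mk_set_ne_zero_iff.mp (hcard ▸ hlam)
  have hxS : x ∈ S := closure_minimal (Subtype.coe_image_subset S A) hS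
    (caPts_subset_closure hne hx)
  exact ⟨⟨x, hxS⟩, by rw [caPts_subtype]; exact hx⟩

theorem exists_subset_caPts_subset_nhds [RegularSpace X] {A : Set X} (hA : A.Nonempty)
    {x : X} (hx : x ∈ caPts A) {V : Set X} (hV : V ∈ 𝓝 x) :
    ∃ A' ⊆ A, #A' = #A ∧ caPts A' ⊆ V ∩ caPts A := by
  obtain ⟨C, ⟨hCx, hC⟩, hCV⟩ := (closed_nhds_basis x).mem_iff.mp hV
  have hcard : #↥(interior C ∩ A) = #A :=
    hx _ isOpen_interior (mem_interior_iff_mem_nhds.mpr hCx)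
  have hne : (interior C ∩ A).Nonempty :=
    mk_set_ne_zero_iff.mp (hcard.trans_ne (mk_set_ne_zero_iff.mpr hA))
  refine ⟨interior C ∩ A, inter_subset_right, hcard, fun y hy => ⟨?_, ?_⟩⟩
  · exact hCV (closure_minimal (inter_subset_left.trans interior_subset) hC
      (caPts_subset_closure hne hy))
  · exact caPts_subset_caPts inter_subset_right hcard.ge hy

theorem dispersion_subtype_eq {S : Set X} (hS : S.Nonempty) {c : Cardinal.{u}}
    (h : ∀ V : Set X, IsOpen V → (V ∩ S).Nonempty → #↥(V ∩ S) = c) :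
    dispersion S = c := by
  have hcard (V : Set X) : #↥(Subtype.val ⁻¹' V : Set S) = #↥(V ∩ S) := by
    rw [← mk_image_eq Subtype.val_injective, Subtype.image_preimage_coe, inter_comm]
  have hset : {c' | ∃ U : Set S, IsOpen U ∧ U.Nonempty ∧ c' = #U} = {c} := by
    refine eq_singleton_iff_unique_mem.mpr ⟨⟨univ, isOpen_univ, ?_, ?_⟩, ?_⟩
    · exact ⟨⟨_, hS.some_mem⟩, mem_univ _⟩
    · rw [← preimage_univ (f := Subtype.val), hcard, univ_inter,
        ← h univ isOpen_univ (by rwa [univ_inter]), univ_inter]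
    · rintro _ ⟨U, hU, ⟨⟨x, hxS⟩, hxU⟩, rfl⟩
      obtain ⟨V, hV, rfl⟩ := isOpen_induced_iff.mp hU
      rw [hcard, h V hV ⟨x, hxU, hxS⟩]
  rw [dispersion, hset, csInf_singleton]

end CompleteAccumulationPoints

section CardinalLemmas

theorem mk_biUnion_le_mul {α ι : Type u} {s : Set ι} {A : ι → Set α} {c : Cardinal.{u}}
    (h : ∀ i ∈ s, #(A i) ≤ c) : #(⋃ i ∈ s, A i) ≤ #s * c :=
  (mk_biUnion_le A s).trans (mul_le_mul_right (ciSup_le' fun i : s => h i i.2) _)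

theorem lt_mk_image_of_mk_preimage_le {α β : Type u} {κ : Cardinal.{u}} (hκ : ℵ₀ ≤ κ)
    (f : α → β) (hf : ∀ y, #(f ⁻¹' {y}) ≤ κ) {W : Set α} (hW : κ < #W) :
    κ < #(f '' W) := by
  by_contra! hle
  have hcover : W ⊆ ⋃ y ∈ f '' W, f ⁻¹' {y} := fun w hw =>
    mem_biUnion (mem_image_of_mem f hw) rfl
  refine hW.not_ge ((mk_le_mk_of_subset hcover).trans ?_)
  calc #(⋃ y ∈ f '' W, f ⁻¹' {y}) ≤ #(f '' W) * κ := mk_biUnion_le_mul fun y _ => hf y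
    _ ≤ κ * κ := mul_le_mul_left hle κ
    _ = κ := mul_eq_self hκ

theorem exists_injective_forall_mem_of_mk_Iio_lt {J β : Type u} [LinearOrder J]
    [WellFoundedLT J] (F : J → Set β) (hF : ∀ j, #(Iio j) < #(F j)) :
    ∃ f : J → β, Function.Injective f ∧ ∀ j, f j ∈ F j := by
  have hfresh (j : J) (g : Iio j → β) : (F j \ range g).Nonempty := by
    rw [nonempty_iff_ne_empty, Ne, sdiff_eq_empty]
    exact fun hsub => (hF j).not_ge ((mk_le_mk_of_subset hsub).trans mk_range_le)
  let f : J → β := wellFounded_lt.fix fun j ih => (hfresh j fun s => ih s s.2).some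
  have hf (j : J) : f j ∈ F j \ range fun s : Iio j => f s := by
    rw [show f j = _ from wellFounded_lt.fix_eq _ j]
    exact (hfresh j _).some_mem
  refine ⟨f, fun s t hst => ?_, fun j => (hf j).1⟩
  by_contra hne
  rcases lt_or_gt_of_ne hne with h | h
  · exact (hf t).2 ⟨⟨s, h⟩, hst⟩
  · exact (hf s).2 ⟨⟨t, h⟩, hst.symm⟩

theorem exists_injective_forall_mem {J β : Type u} (F : J → Set β) (hF : ∀ j, #J ≤ #(F j)) :
    ∃ f : J → β, Function.Injective f ∧ ∀ j, f j ∈ F j := by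
  obtain ⟨e⟩ : Nonempty (J ≃ (#J).ord.ToType) := Cardinal.eq.mp (mk_ord_toType _).symm
  obtain ⟨f, hf, hmem⟩ := exists_injective_forall_mem_of_mk_Iio_lt (F ∘ e.symm) fun j =>
    (mk_Iio_lt j (by simp)).trans_le ((mk_ord_toType _).trans_le (hF (e.symm j)))
  exact ⟨f ∘ e, hf.comp e.injective, fun j => by simpa using hmem (e j)⟩

theorem Setoid.iSup_apply_of_directed {α ι : Type*} {r : ι → Setoid α}
    (hr : Directed (· ≤ ·) r) {x y : α} : (⨆ i, r i) x y ↔ x = y ∨ ∃ i, r i x y := by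
  let u : Setoid α :=
    { r := fun x y => x = y ∨ ∃ i, r i x y
      iseqv := by
        refine ⟨fun _ => Or.inl rfl, ?_, ?_⟩
        · rintro x y (rfl | ⟨i, h⟩)
          exacts [Or.inl rfl, Or.inr ⟨i, (r i).symm' h⟩]
        · rintro x y z (rfl | ⟨i, hxy⟩) (rfl | ⟨j, hyz⟩)
          · exact Or.inl rfl
          · exact Or.inr ⟨j, hyz⟩
          · exact Or.inr ⟨i, hxy⟩
          · obtain ⟨k, hik, hjk⟩ := hr i j
            exact Or.inr ⟨k, (r k).trans' (hik hxy) (hjk hyz)⟩ }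
  have hu : ⨆ i, r i = u := by
    refine le_antisymm (iSup_le fun i _ _ h => Or.inr ⟨i, h⟩) ?_
    rintro x y (rfl | ⟨i, h⟩)
    exacts [(⨆ i, r i).refl' x, le_iSup r i h]
  rw [hu]
  rfl

theorem exists_subset_of_mk_lt {ι Y : Type u} [LinearOrder ι] {g h : ι → Set Y} {C : Set Y}
    (hgh : ∀ s t, s < t → g s ⊆ h t) (hgC : ∀ t, g t ⊆ C) (hC : #C < #ι) :
    ∃ t, g t ⊆ h t := by
  by_contra! H
  choose x hxg hxh using fun t => not_subset.mp (H t)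
  refine hC.not_ge (mk_le_of_injective (f := fun t => (⟨x t, hgC t (hxg t)⟩ : C)) ?_)
  intro s t hst
  have hst : x s = x t := congrArg Subtype.val hst
  by_contra hne
  rcases lt_or_gt_of_ne hne with hlt | hlt
  · exact hxh t (hst ▸ hgh s t hlt (hxg s))
  · exact hxh s (hst ▸ hgh t s hlt (hxg t))

end CardinalLemmas

namespace BlockMerging

section Pieces

variable {X ι : Type u} {κ : Cardinal.{u}}

structure IsBlockFamily (κ : Cardinal.{u}) (B : Set X) (b : ι → Set X) : Prop where
  subset : ∀ t, b t ⊆ B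
  mk_eq : ∀ t, #(b t) = Order.succ κ
  pairwise_disjoint : Pairwise fun s t => Disjoint (b s) (b t)

theorem exists_isBlockFamily (hκ : ℵ₀ ≤ κ) (hι : #ι = Order.succ κ) {B : Set X}
    (hB : #B = Order.succ κ) : ∃ b : ι → Set X, IsBlockFamily κ B b := by
  obtain ⟨e⟩ : Nonempty (B ≃ ι × ι) := Cardinal.eq.mp <| by
    rw [hB, mk_prod, lift_id, hι, mul_eq_self (hκ.trans (Order.le_succ κ))]
  refine ⟨fun t => Subtype.val '' {z | (e z).1 = t}, fun t => ?_, fun t => ?_,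
    fun s t hst => ?_⟩
  · exact Subtype.coe_image_subset _ _
  · refine le_antisymm ((mk_le_mk_of_subset (Subtype.coe_image_subset _ _)).trans hB.le) ?_
    rw [← hι]
    refine mk_le_of_injective (f := fun j => ⟨e.symm (t, j), e.symm (t, j), by simp, rfl⟩) ?_
    intro j j' h
    have h' := congrArg Subtype.val h
    simp only at h'
    exact (Prod.mk.inj (e.symm.injective (Subtype.val_injective h'))).2
  · show Disjoint _ _
    rw [Set.disjoint_left]
    rintro _ ⟨z, rfl, rfl⟩ ⟨z', hz', hzz'⟩
    exact hst (Subtype.val_injective hzz' ▸ hz')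

def HasSmallClasses (κ : Cardinal.{u}) (s : Setoid ι) : Prop :=
  ∀ i, #{j | s i j} ≤ κ

theorem HasSmallClasses.mk_preimage_mk_le {s : Setoid ι} (hs : HasSmallClasses κ s)
    (q : Quotient s) : #(Quotient.mk s ⁻¹' {q}) ≤ κ := by
  refine (mk_le_mk_of_subset fun j (hj : Quotient.mk s j = q) => ?_).trans (hs q.out)
  exact Quotient.exact (hj.trans q.out_eq.symm) |> s.symm'

def piece (b : ι → Set X) (s : Setoid ι) (i : ι) : Set X := ⋃ j ∈ {j | s i j}, b j

variable {b : ι → Set X}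

theorem piece_congr {s : Setoid ι} {i j : ι} (h : s i j) : piece b s i = piece b s j := by
  have : {k | s i k} = {k | s j k} := Set.ext fun k => ⟨s.trans' (s.symm' h), s.trans' h⟩
  simp only [piece, this]

theorem piece_mono {s s' : Setoid ι} (h : s ≤ s') (i : ι) : piece b s i ⊆ piece b s' i :=
  biUnion_subset_biUnion_left fun _ hj => h hj

namespace IsBlockFamily

variable {B : Set X}

theorem piece_subset (hb : IsBlockFamily κ B b) (s : Setoid ι) (i : ι) : piece b s i ⊆ B :=
  iUnion₂_subset fun j _ => hb.subset j

theorem mk_piece (hb : IsBlockFamily κ B b) (hκ : ℵ₀ ≤ κ) {s : Setoid ι}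
    (hs : HasSmallClasses κ s) (i : ι) : #(piece b s i) = Order.succ κ := by
  refine le_antisymm ?_ ((hb.mk_eq i).symm.trans_le
    (mk_le_mk_of_subset (subset_biUnion_of_mem (u := b) (s.refl' i))))
  calc #(piece b s i) ≤ #{j | s i j} * Order.succ κ :=
        mk_biUnion_le_mul fun j _ => (hb.mk_eq j).le
    _ ≤ Order.succ κ * Order.succ κ := mul_le_mul_left ((hs i).trans (Order.le_succ κ)) _
    _ = Order.succ κ := mul_eq_self (hκ.trans (Order.le_succ κ))

theorem disjoint_piece (hb : IsBlockFamily κ B b) {s : Setoid ι} {i j : ι} (h : ¬ s i j) :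
    Disjoint (piece b s i) (piece b s j) := by
  simp only [piece, disjoint_iUnion_left, disjoint_iUnion_right]
  intro k hk l hl
  refine hb.pairwise_disjoint fun hkl => ?_
  subst hkl
  exact h (s.trans' hl (s.symm' hk))

end IsBlockFamily

variable [TopologicalSpace X]

def seers (b : ι → Set X) (s : Setoid ι) (x : X) : Set ι := {i | x ∈ caPts (piece b s i)}

def commonPts (b : ι → Set X) (κ : Cardinal.{u}) (s : Setoid ι) : Set X :=
  {x | #(seers b s x) = Order.succ κ}

theorem mk_seers_le_of_notMem (hι : #ι = Order.succ κ) {s : Setoid ι} {x : X}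
    (hx : x ∉ commonPts b κ s) : #(seers b s x) ≤ κ :=
  Order.lt_succ_iff.mp ((hι ▸ mk_set_le _ : #(seers b s x) ≤ _).lt_of_ne hx)

namespace IsBlockFamily

variable {B : Set X}

theorem caPts_piece_subset (hb : IsBlockFamily κ B b) (hκ : ℵ₀ ≤ κ)
    (hB : #B = Order.succ κ) {s : Setoid ι} (hs : HasSmallClasses κ s) (i : ι) :
    caPts (piece b s i) ⊆ caPts B :=
  caPts_subset_caPts (hb.piece_subset s i) (by rw [hB, hb.mk_piece hκ hs])

theorem commonPts_subset_caPts (hb : IsBlockFamily κ B b) (hκ : ℵ₀ ≤ κ)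
    (hB : #B = Order.succ κ) {s : Setoid ι} (hs : HasSmallClasses κ s) :
    commonPts b κ s ⊆ caPts B := by
  intro x (hx : #(seers b s x) = Order.succ κ)
  obtain ⟨i, hi⟩ : (seers b s x).Nonempty := mk_set_ne_zero_iff.mp (hx ▸ succ_ne_zero κ)
  exact hb.caPts_piece_subset hκ hB hs i hi

theorem commonPts_subset_commonPts (hb : IsBlockFamily κ B b) (hκ : ℵ₀ ≤ κ)
    (hι : #ι = Order.succ κ) {s s' : Setoid ι} (hs : HasSmallClasses κ s)
    (hs' : HasSmallClasses κ s') (h : s ≤ s') : commonPts b κ s ⊆ commonPts b κ s' := by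
  intro x (hx : #(seers b s x) = Order.succ κ)
  have hsub : seers b s x ⊆ seers b s' x := fun i hi =>
    caPts_subset_caPts (piece_mono h i) (by rw [hb.mk_piece hκ hs, hb.mk_piece hκ hs']) hi
  exact le_antisymm (hι ▸ mk_set_le _) (hx ▸ mk_le_mk_of_subset hsub)

end IsBlockFamily

end Pieces

section Merge

variable {ι O : Type u} {κ : Cardinal.{u}} {s : Setoid ι} (Q : ι × O → Quotient s)

open Classical in
/-- The classes `Q (β, o)` for a fixed `β` are glued into one class labelled `β`; every other
class keeps its own label. -/
noncomputable def mergeLabel (q : Quotient s) : ι ⊕ Quotient s :=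
  if h : q ∈ range Q then .inl h.choose.1 else .inr q

noncomputable def mergeSetoid : Setoid ι := Setoid.ker fun i => mergeLabel Q (Quotient.mk s i)

variable {Q}

theorem le_mergeSetoid : s ≤ mergeSetoid Q :=
  fun _ _ h => congrArg (mergeLabel Q) (Quotient.sound h)

theorem mergeLabel_apply (hQ : Function.Injective Q) (z : ι × O) :
    mergeLabel Q (Q z) = .inl z.1 := by
  have h : Q z ∈ range Q := mem_range_self z
  rw [mergeLabel, dif_pos h, hQ h.choose_spec]

theorem mergeSetoid_rel (hQ : Function.Injective Q) {i j β : ι} {o o' : O}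
    (hi : Quotient.mk s i = Q (β, o)) (hj : Quotient.mk s j = Q (β, o')) : mergeSetoid Q i j := by
  show mergeLabel Q _ = mergeLabel Q _
  rw [hi, hj, mergeLabel_apply hQ, mergeLabel_apply hQ]

theorem not_mergeSetoid_rel (hQ : Function.Injective Q) {i j β β' : ι} {o o' : O}
    (hi : Quotient.mk s i = Q (β, o)) (hj : Quotient.mk s j = Q (β', o')) (hne : β ≠ β') :
    ¬ mergeSetoid Q i j := by
  show mergeLabel Q _ ≠ mergeLabel Q _
  rw [hi, hj, mergeLabel_apply hQ, mergeLabel_apply hQ]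
  exact fun h => hne (Sum.inl_injective h)

theorem mk_preimage_mergeLabel_le (hQ : Function.Injective Q) (hO : #O ≤ κ) (hκ : 1 ≤ κ)
    (v : ι ⊕ Quotient s) : #(mergeLabel Q ⁻¹' {v}) ≤ κ := by
  rcases v with β | q₀
  · refine (mk_le_mk_of_subset (t := range fun o => Q (β, o)) ?_).trans (mk_range_le.trans hO)
    intro q hq
    by_cases h : q ∈ range Q
    · obtain ⟨z, rfl⟩ := h
      rw [mem_preimage, mergeLabel_apply hQ, mem_singleton_iff, Sum.inl.injEq] at hq
      exact ⟨z.2, by rw [← hq]⟩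
    · simp [mergeLabel, h] at hq
  · refine (mk_le_mk_of_subset (t := {q₀}) ?_).trans (mk_singleton q₀ ▸ hκ)
    intro q hq
    by_cases h : q ∈ range Q
    · obtain ⟨z, rfl⟩ := h
      simp [mergeLabel_apply hQ] at hq
    · simpa [mergeLabel, h] using hq

theorem hasSmallClasses_mergeSetoid (hκ : ℵ₀ ≤ κ) (hO : #O ≤ κ)
    (hQ : Function.Injective Q) (hs : HasSmallClasses κ s) :
    HasSmallClasses κ (mergeSetoid Q) := by
  intro i
  set v := mergeLabel Q (Quotient.mk s i)
  set U := ⋃ q ∈ mergeLabel Q ⁻¹' {v}, Quotient.mk s ⁻¹' {q}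
  have hsub : {j | mergeSetoid Q i j} ⊆ U :=
    fun j (hj : v = _) => mem_biUnion (x := Quotient.mk s j) hj.symm rfl
  calc #{j | mergeSetoid Q i j} ≤ #U := mk_le_mk_of_subset hsub
    _ ≤ #(mergeLabel Q ⁻¹' {v}) * κ := mk_biUnion_le_mul fun q _ => hs.mk_preimage_mk_le q
    _ ≤ κ * κ :=
      mul_le_mul_left (mk_preimage_mergeLabel_le hQ hO (one_le_aleph0.trans hκ) v) κ
    _ = κ := mul_eq_self hκ

end Merge

theorem IsBlockFamily.exists_merge {X ι : Type u} [TopologicalSpace X] {κ : Cardinal.{u}}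
    {B : Set X} {b : ι → Set X} (hb : IsBlockFamily κ B b) (hκ : ℵ₀ ≤ κ)
    (hι : #ι = Order.succ κ) {s : Setoid ι} (hs : HasSmallClasses κ s)
    (hD : #(commonPts b κ s) ≤ κ) :
    ∃ s', s ≤ s' ∧ HasSmallClasses κ s' ∧ ∃ S : Set ι, #S = Order.succ κ ∧
      S.Pairwise (fun i j => ¬ s' i j) ∧
      ∀ i ∈ S, closure (commonPts b κ s) ⊆ caPts (piece b s' i) := by
  set D := commonPts b κ s
  have hO : #(Option D) ≤ κ := by
    rw [mk_option]
    exact add_le_of_le hκ hD (one_le_aleph0.trans hκ)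
  -- `none` keeps every merged class nonempty, also when `D = ∅`
  let T (o : Option D) : Set ι := o.elim univ fun x => seers b s x
  have hT (o : Option D) : #(T o) = Order.succ κ := by
    cases o with
    | none => simpa [T] using hι
    | some x => exact x.2
  have hJ : #(ι × Option D) ≤ Order.succ κ := by
    rw [mk_prod, lift_id, lift_id, hι]
    exact (mul_le_mul_right (hO.trans (Order.le_succ κ)) _).trans_eq
      (mul_eq_self (hκ.trans (Order.le_succ κ)))
  obtain ⟨Q, hQ, hQT⟩ := exists_injective_forall_mem
    (fun z : ι × Option D => Quotient.mk s '' T z.2) fun z => hJ.trans <| Order.succ_le_of_lt <|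
      lt_mk_image_of_mk_preimage_le hκ _ hs.mk_preimage_mk_le ((hT z.2).symm ▸ Order.lt_succ κ)
  have hs' := hasSmallClasses_mergeSetoid hκ hO hQ hs
  refine ⟨mergeSetoid Q, le_mergeSetoid, hs', range fun β => (Q (β, none)).out, ?_, ?_, ?_⟩
  · rw [mk_range_eq _ fun β β' h => (Prod.mk.inj (hQ (Quotient.out_injective h))).1, hι]
  · rintro _ ⟨β, rfl⟩ _ ⟨β', rfl⟩ hne
    exact not_mergeSetoid_rel hQ (Quotient.out_eq _) (Quotient.out_eq _) fun h => hne (h ▸ rfl)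
  · rintro _ ⟨β, rfl⟩
    refine closure_minimal (fun x hx => ?_) (isClosed_caPts _)
    obtain ⟨i, hi, hiQ⟩ := hQT (β, some ⟨x, hx⟩)
    have hsub : piece b s i ⊆ piece b (mergeSetoid Q) (Q (β, none)).out :=
      (piece_mono le_mergeSetoid i).trans_eq
        (piece_congr (mergeSetoid_rel hQ hiQ (Quotient.out_eq _)))
    exact caPts_subset_caPts hsub (by rw [hb.mk_piece hκ hs, hb.mk_piece hκ hs']) hi

section Tower

variable {ι : Type u} [LinearOrder ι] [WellFoundedLT ι] (next : Setoid ι → Setoid ι)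

noncomputable def tower : ι → Setoid ι :=
  wellFounded_lt.fix fun t ih => next (⨆ s : Iio t, ih s s.2)

noncomputable def towerBelow (t : ι) : Setoid ι := ⨆ s : Iio t, tower next s

theorem tower_eq (t : ι) : tower next t = next (towerBelow next t) :=
  wellFounded_lt.fix_eq _ t

variable {next}

theorem tower_le_towerBelow {s t : ι} (h : s < t) : tower next s ≤ towerBelow next t :=
  le_iSup (fun s : Iio t => tower next s) ⟨s, h⟩

theorem monotone_tower (hnext : ∀ r, r ≤ next r) : Monotone (tower next) := by
  intro s t hst
  rcases hst.lt_or_eq with h | rfl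
  · exact (tower_le_towerBelow h).trans ((hnext _).trans_eq (tower_eq next t).symm)
  · exact le_rfl

theorem hasSmallClasses_towerBelow {κ : Cardinal.{u}} (hκ : ℵ₀ ≤ κ)
    (hnext : ∀ r, r ≤ next r) {t : ι} (hIio : #(Iio t) ≤ κ)
    (h : ∀ s < t, HasSmallClasses κ (tower next s)) :
    HasSmallClasses κ (towerBelow next t) := by
  intro i
  have hdir : Directed (· ≤ ·) fun s : Iio t => tower next s :=
    ((monotone_tower hnext).comp (Subtype.mono_coe _)).directed_le
  have hsub : {j | towerBelow next t i j} ⊆ {i} ∪ ⋃ s : Iio t, {j | tower next s i j} := by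
    intro j hj
    rcases (Setoid.iSup_apply_of_directed hdir).mp hj with rfl | ⟨s, hs⟩
    exacts [Or.inl rfl, Or.inr (mem_iUnion.mpr ⟨s, hs⟩)]
  refine (mk_le_mk_of_subset hsub).trans ((mk_union_le _ _).trans (add_le_of_le hκ ?_ ?_))
  · exact (mk_singleton i).trans_le (one_le_aleph0.trans hκ)
  · calc #(⋃ s : Iio t, {j | tower next s i j}) ≤ #(Iio t) * κ :=
          (mk_iUnion_le _).trans (mul_le_mul_right (ciSup_le' fun s : Iio t => h s s.2 i) _)
      _ ≤ κ * κ := mul_le_mul_left hIio κ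
      _ = κ := mul_eq_self hκ

theorem hasSmallClasses_tower {κ : Cardinal.{u}} (hκ : ℵ₀ ≤ κ)
    (hIio : ∀ t : ι, #(Iio t) ≤ κ) (hnext : ∀ r, r ≤ next r)
    (hsmall : ∀ r, HasSmallClasses κ r → HasSmallClasses κ (next r))
    (t : ι) : HasSmallClasses κ (towerBelow next t) ∧ HasSmallClasses κ (tower next t) := by
  induction t using WellFoundedLT.induction with
  | _ t ih =>
    have hbelow := hasSmallClasses_towerBelow hκ hnext (hIio t) fun s hs => (ih s hs).2
    exact ⟨hbelow, tower_eq next t ▸ hsmall _ hbelow⟩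

end Tower

namespace IsBlockFamily

variable {X ι : Type u} [TopologicalSpace X] {κ : Cardinal.{u}} {B : Set X} {b : ι → Set X}

theorem mk_setOf_caPts_piece_subset_commonPts (hb : IsBlockFamily κ B b) (hκ : ℵ₀ ≤ κ)
    (hι : #ι = Order.succ κ) (hB : #B = Order.succ κ) (hC : #(caPts B) ≤ κ)
    {s : Setoid ι} (hs : HasSmallClasses κ s) {S : Set ι} (hS : #S = Order.succ κ) :
    #{i ∈ S | caPts (piece b s i) ⊆ commonPts b κ s} = Order.succ κ := by
  set S' := {i ∈ S | caPts (piece b s i) ⊆ commonPts b κ s}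
  have hbad : S \ S' ⊆ ⋃ x ∈ caPts B \ commonPts b κ s, seers b s x := by
    rintro i ⟨hiS, hiS'⟩
    obtain ⟨x, hx, hxD⟩ := not_subset.mp fun h => hiS' ⟨hiS, h⟩
    exact mem_biUnion ⟨hb.caPts_piece_subset hκ hB hs i hx, hxD⟩ hx
  have hbad_card : #↥(S \ S') ≤ κ := calc
    #↥(S \ S') ≤ #↥(caPts B \ commonPts b κ s) * κ := (mk_le_mk_of_subset hbad).trans
        (mk_biUnion_le_mul fun x hx => mk_seers_le_of_notMem hι hx.2)
    _ ≤ κ * κ := mul_le_mul_left ((mk_le_mk_of_subset sdiff_subset).trans hC) κ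
    _ = κ := mul_eq_self hκ
  refine le_antisymm (hS ▸ mk_le_mk_of_subset (sep_subset S _)) (Order.succ_le_of_lt ?_)
  by_contra! hle
  refine (Order.lt_succ κ).not_ge ?_
  calc Order.succ κ = #S := hS.symm
    _ ≤ #↥(S' ∪ S \ S') :=
        mk_le_mk_of_subset (subset_union_right.trans_eq union_sdiff_self.symm)
    _ ≤ #S' + #↥(S \ S') := mk_union_le _ _
    _ ≤ κ + κ := add_le_add hle hbad_card
    _ = κ := add_eq_self hκ

theorem isKApproximated_commonPts (hb : IsBlockFamily κ B b) (hκ : ℵ₀ ≤ κ)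
    (hι : #ι = Order.succ κ) (hB : #B = Order.succ κ) (hC : #(caPts B) ≤ κ)
    (hcomp : LamCompactSpace X (Order.succ κ)) {s : Setoid ι} (hs : HasSmallClasses κ s)
    {S : Set ι} (hS : #S = Order.succ κ) (hSp : S.Pairwise fun i j => ¬ s i j)
    (hsee : ∀ i ∈ S, commonPts b κ s ⊆ caPts (piece b s i)) :
    IsKApproximated (Order.succ κ) (commonPts b κ s) := by
  set S' := {i ∈ S | caPts (piece b s i) ⊆ commonPts b κ s}
  have hdisj : S'.Pairwise fun i j => Disjoint (piece b s i) (piece b s j) :=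
    fun i hi j hj hij => hb.disjoint_piece (hSp hi.1 hj.1 hij)
  have hinj : InjOn (piece b s) S' := by
    intro i hi j hj hij
    by_contra hne
    have hself : Disjoint (piece b s i) (piece b s j) := hdisj hi hj hne
    rw [hij] at hself
    exact (mk_set_ne_zero_iff.mp ((hb.mk_piece hκ hs j).trans_ne (succ_ne_zero κ))).ne_empty
      (disjoint_self.mp hself)
  refine ⟨piece b s '' S', ?_, ?_, ?_⟩
  · rw [mk_image_eq_of_injOn _ _ hinj,
      hb.mk_setOf_caPts_piece_subset_commonPts hκ hι hB hC hs hS]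
  · rintro _ ⟨i, hi, rfl⟩ _ ⟨j, hj, rfl⟩ hne
    exact hdisj hi hj fun h => hne (h ▸ rfl)
  · rintro _ ⟨i, hi, rfl⟩
    exact ⟨hb.mk_piece hκ hs i, fun Y _ hY => hcomp Y hY, hi.2.antisymm (hsee i hi.1)⟩

end IsBlockFamily

end BlockMerging

open BlockMerging in
theorem succ_le_mk_caPts {X : Type u} [TopologicalSpace X] {κ : Cardinal.{u}} (hκ : ℵ₀ ≤ κ)
    (hcomp : LamCompactSpace X (Order.succ κ))
    (hnoapp : ∀ H : Set X, ¬ IsKApproximated (Order.succ κ) H) {B : Set X}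
    (hB : #B = Order.succ κ) : Order.succ κ ≤ #(caPts B) := by
  by_contra! hlt
  have hC : #(caPts B) ≤ κ := Order.lt_succ_iff.mp hlt
  let ι := (Order.succ κ).ord.ToType
  have hι : #ι = Order.succ κ := mk_ord_toType _
  have hIio (t : ι) : #(Iio t) ≤ κ := Order.lt_succ_iff.mp <|
    (mk_Iio_lt t (by rw [mk_ord_toType, Ordinal.type_toType])).trans_eq hι
  obtain ⟨b, hb⟩ := exists_isBlockFamily hκ hι hB
  have hstep (r : Setoid ι) : ∃ r', r ≤ r' ∧
      (HasSmallClasses κ r → HasSmallClasses κ r' ∧ ∃ S : Set ι, #S = Order.succ κ ∧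
        S.Pairwise (fun i j => ¬ r' i j) ∧
        ∀ i ∈ S, closure (commonPts b κ r) ⊆ caPts (piece b r' i)) := by
    by_cases hr : HasSmallClasses κ r
    · obtain ⟨r', hle, hr', hS⟩ := hb.exists_merge hκ hι hr
        ((mk_le_mk_of_subset (hb.commonPts_subset_caPts hκ hB hr)).trans hC)
      exact ⟨r', hle, fun _ => ⟨hr', hS⟩⟩
    · exact ⟨r, le_rfl, fun h => absurd h hr⟩
  choose next hle hnext using hstep
  have hsmall := hasSmallClasses_tower hκ hIio hle fun r hr => (hnext r hr).1
  obtain ⟨t, ht⟩ := exists_subset_of_mk_lt (g := fun t => commonPts b κ (tower next t))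
    (h := fun t => commonPts b κ (towerBelow next t))
    (fun s t hst => hb.commonPts_subset_commonPts hκ hι (hsmall s).2 (hsmall t).1
      (tower_le_towerBelow hst))
    (fun t => hb.commonPts_subset_caPts hκ hB (hsmall t).2) (hlt.trans_eq hι.symm)
  obtain ⟨S, hS, hSp, hsee⟩ := (hnext _ (hsmall t).1).2
  rw [← tower_eq next t] at hSp hsee
  exact hnoapp _ (hb.isKApproximated_commonPts hκ hι hB hC hcomp (hsmall t).2 hS hSp
    fun i hi => (ht.trans subset_closure).trans (hsee i hi))

theorem stmt18_general {X : Type u} [TopologicalSpace X] [RegularSpace X] (κ : Cardinal.{u})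
    (hκ : ℵ₀ ≤ κ) (hcomp : LamCompactSpace X (Order.succ κ))
    (hcard : #X = Order.succ κ)
    (hnoapp : ∀ H : Set X, ¬ IsKApproximated (Order.succ κ) H) :
    ∀ A : Set X, #A = Order.succ κ →
      RegularSpace ↥(caPts A) ∧ LamCompactSpace ↥(caPts A) (Order.succ κ) ∧
      #(↥(caPts A)) = Order.succ κ ∧ dispersion ↥(caPts A) = Order.succ κ := by
  intro A hA
  have hA_ne : A.Nonempty := mk_set_ne_zero_iff.mp (hA ▸ succ_ne_zero κ)
  have hle_succ (Y : Set X) : #Y ≤ Order.succ κ := hcard ▸ mk_set_le Y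
  refine ⟨inferInstance, hcomp.subtype (succ_ne_zero κ) (isClosed_caPts A),
    (hle_succ _).antisymm (succ_le_mk_caPts hκ hcomp hnoapp hA), ?_⟩
  refine dispersion_subtype_eq (hcomp A hA) fun V hV ⟨x, hxV, hxA⟩ => (hle_succ _).antisymm ?_
  obtain ⟨A', -, hA', hsub⟩ := exists_subset_caPts_subset_nhds hA_ne hxA (hV.mem_nhds hxV)
  exact (succ_le_mk_caPts hκ hcomp hnoapp (hA'.trans hA)).trans (mk_le_mk_of_subset hsub)

/-- If `X` is a regular `κ⁺`-compact space with `|X| = Δ(X) = κ⁺` having no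
`κ⁺`-approximated subset, then for every `A ∈ [X]^{κ⁺}` the subspace `A°` is a regular
`κ⁺`-compact space with `|A°| = Δ(A°) = κ⁺`. -/
theorem stmt18 {X : Type u} [TopologicalSpace X] [RegularSpace X] (κ : Cardinal.{u})
    (hκ : ℵ₀ ≤ κ) (hcomp : LamCompactSpace X (Order.succ κ))
    (hcard : #X = Order.succ κ) (hdisp : dispersion X = Order.succ κ)
    (hnoapp : ∀ H : Set X, ¬ IsKApproximated (Order.succ κ) H) :
    ∀ A : Set X, #A = Order.succ κ →
      RegularSpace ↥(caPts A) ∧ LamCompactSpace ↥(caPts A) (Order.succ κ) ∧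
      #(↥(caPts A)) = Order.succ κ ∧ dispersion ↥(caPts A) = Order.succ κ :=
  stmt18_general κ hκ hcomp hcard hnoapp
end
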